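/- arXiv:1301.6378 — 7 statements merged into one kernel-verified Lean document; each statement's English description precedes it below -/
import Mathlib

section
/- (Sharpness of the Poincaré constant, Proposition 4.3) Suppose κ ≥ 0 is a constant such that ∫_ℝ h(x)² w(x)² dx ≤ κ ∫_ℝ h'(x)² w(x)² dx holds for every continuously differentiable h : ℝ → ℝ with h and h' bounded and ∫_ℝ h(x) w(x)² dx = 0. Then κ ≥ 4/(3k²). -/
open Real MeasureTheory

/-- The wave number `k = sqrt(b/(2ν))`. -/
noncomputable def waveK (ν b : ℝ) : ℝ := Real.sqrt (b / (2 * ν))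

/-- The travelling wave profile `v(x) = (1 + exp(-k x))⁻¹`. -/
noncomputable def twProfile (ν b : ℝ) (x : ℝ) : ℝ :=
  (1 + Real.exp (-(waveK ν b) * x))⁻¹

/-- `w = v' = k v (1 - v)`. -/
noncomputable def twW (ν b : ℝ) (x : ℝ) : ℝ :=
  waveK ν b * twProfile ν b x * (1 - twProfile ν b x)

/-!
With `c = k/2` one has `w x = (c/2) / cosh (c x) ^ 2`, so the substitution `y = c x` turns the
quotient `∫ h² w² / ∫ h'² w²` of `h x = g (c x)` into `c⁻² ∫ g² / cosh⁴ / ∫ g'² / cosh⁴`.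
For `g = sinh` the two integrals are `2/3` and `2`, which gives `1 / (3 c²) = 4 / (3 k²)`.
Since `sinh` is unbounded, it is approximated by the bounded odd functions
`sinh y * exp (-ε cosh y)`; both integrals converge as `ε → 0⁺` by dominated convergence
with dominating function `cosh⁻²`, and oddness gives `∫ h w² = 0`.
-/

open Filter Topology Set

theorem hasDerivAt_tanh (y : ℝ) : HasDerivAt tanh (cosh y ^ 2)⁻¹ y := by
  have h := (hasDerivAt_sinh y).div (hasDerivAt_cosh y) (cosh_pos y).ne'
  rw [show sinh / cosh = tanh from funext fun x => (tanh_eq_sinh_div_cosh x).symm] at h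
  refine h.congr_deriv ?_
  rw [inv_eq_one_div, ← cosh_sq_sub_sinh_sq y]
  ring

theorem tanh_eq_one_sub (y : ℝ) : tanh y = 1 - 2 / (exp (2 * y) + 1) := by
  rw [tanh_eq, exp_neg, show 2 * y = y + y by ring, exp_add]
  have := exp_pos y
  field_simp
  ring

theorem tendsto_tanh_atTop : Tendsto tanh atTop (𝓝 1) := by
  have h : Tendsto (fun y => exp (2 * y) + 1) atTop atTop :=
    tendsto_atTop_add_const_right _ 1
      (tendsto_exp_atTop.comp (tendsto_id.const_mul_atTop two_pos))
  have h' := (h.inv_tendsto_atTop.const_mul 2).const_sub 1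
  rw [mul_zero, sub_zero] at h'
  refine h'.congr fun y => ?_
  simp [tanh_eq_one_sub, div_eq_mul_inv]

theorem tendsto_tanh_atBot : Tendsto tanh atBot (𝓝 (-1)) := by
  simpa [Function.comp_def, tanh_neg] using
    (tendsto_tanh_atTop.comp tendsto_neg_atBot_atTop).neg

theorem sq_le_sinh_sq (y : ℝ) : y ^ 2 ≤ sinh y ^ 2 := by
  rw [← sq_abs, ← sq_abs (sinh y), abs_sinh]
  gcongr
  exact self_le_sinh_iff.2 (abs_nonneg y)

theorem abs_sinh_le_cosh (y : ℝ) : |sinh y| ≤ cosh y := by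
  rw [abs_sinh, ← cosh_abs]
  exact (sinh_lt_cosh _).le

theorem sq_div_cosh_pow_four_le {u y : ℝ} (hu : |u| ≤ cosh y) :
    u ^ 2 / cosh y ^ 4 ≤ (cosh y ^ 2)⁻¹ := by
  have := cosh_pos y
  calc u ^ 2 / cosh y ^ 4 ≤ cosh y ^ 2 / cosh y ^ 4 := by
        gcongr ?_ / _
        exact sq_le_sq' (abs_le.mp hu).1 (abs_le.mp hu).2
    _ = (cosh y ^ 2)⁻¹ := by field_simp

theorem integrable_inv_cosh_sq : Integrable fun y => (cosh y ^ 2)⁻¹ := by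
  refine integrable_inv_one_add_sq.mono' (by fun_prop) (Eventually.of_forall fun y => ?_)
  rw [norm_inv, norm_pow, norm_of_nonneg (cosh_pos y).le, cosh_sq']
  exact inv_anti₀ (by positivity) (by linarith [sq_le_sinh_sq y])

theorem integral_inv_cosh_sq : ∫ y, (cosh y ^ 2)⁻¹ = 2 := by
  rw [integral_of_hasDerivAt_of_tendsto hasDerivAt_tanh integrable_inv_cosh_sq
    tendsto_tanh_atBot tendsto_tanh_atTop]
  norm_num

theorem integral_sinh_sq_div_cosh_pow_four : ∫ y, sinh y ^ 2 / cosh y ^ 4 = 2 / 3 := by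
  have hderiv (y : ℝ) : HasDerivAt (fun y => tanh y ^ 3 / 3) (sinh y ^ 2 / cosh y ^ 4) y := by
    refine (((hasDerivAt_tanh y).pow 3).div_const 3).congr_deriv ?_
    have := (cosh_pos y).ne'
    norm_num [tanh_eq_sinh_div_cosh]
    field_simp
  have hint : Integrable fun y => sinh y ^ 2 / cosh y ^ 4 := by
    refine integrable_inv_cosh_sq.mono' (by fun_prop : Measurable _).aestronglyMeasurable
      (Eventually.of_forall fun y => ?_)
    rw [norm_of_nonneg (by positivity)]
    exact sq_div_cosh_pow_four_le (abs_sinh_le_cosh y)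
  rw [integral_of_hasDerivAt_of_tendsto hderiv hint
    ((tendsto_tanh_atBot.pow 3).div_const 3) ((tendsto_tanh_atTop.pow 3).div_const 3)]
  norm_num

theorem integral_eq_zero_of_odd {E : Type*} [NormedAddCommGroup E] [NormedSpace ℝ E]
    {f : ℝ → E} (hf : Function.Odd f) : ∫ x, f x = 0 := by
  have h := integral_neg_eq_self f volume
  simp only [show ∀ x, f (-x) = -f x from hf, integral_neg] at h
  have h2 : (2 : ℝ) • ∫ x, f x = 0 := by
    rw [two_smul]
    nth_rw 1 [← h]
    exact neg_add_cancel _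
  exact (smul_eq_zero.mp h2).resolve_left two_ne_zero

theorem one_add_mul_exp_neg_le_one (t : ℝ) : (1 + t) * exp (-t) ≤ 1 :=
  calc (1 + t) * exp (-t) ≤ exp t * exp (-t) := by gcongr; linarith [add_one_le_exp t]
    _ = 1 := by rw [← exp_add, add_neg_cancel, exp_zero]

theorem mul_one_add_mul_exp_neg_le_two {t : ℝ} (ht : 0 ≤ t) : t * (1 + t) * exp (-t) ≤ 2 :=
  calc t * (1 + t) * exp (-t) ≤ 2 * exp t * exp (-t) := by
        gcongr ?_ * _; nlinarith [quadratic_le_exp_of_nonneg ht]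
    _ = 2 := by rw [mul_assoc, ← exp_add, add_neg_cancel, exp_zero, mul_one]

noncomputable def sinhCutoff (ε y : ℝ) : ℝ := sinh y * exp (-(ε * cosh y))

noncomputable def sinhCutoffDeriv (ε y : ℝ) : ℝ :=
  (cosh y - ε * sinh y ^ 2) * exp (-(ε * cosh y))

noncomputable def coshCutoffBound (ε y : ℝ) : ℝ :=
  cosh y * (1 + ε * cosh y) * exp (-(ε * cosh y))

theorem sinhCutoff_odd (ε : ℝ) : Function.Odd (sinhCutoff ε) := fun y => by
  simp [sinhCutoff]

theorem continuous_sinhCutoff : Continuous fun p : ℝ × ℝ => sinhCutoff p.1 p.2 := by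
  unfold sinhCutoff; fun_prop

theorem continuous_sinhCutoffDeriv : Continuous fun p : ℝ × ℝ => sinhCutoffDeriv p.1 p.2 := by
  unfold sinhCutoffDeriv; fun_prop

theorem contDiff_sinhCutoff (ε : ℝ) : ContDiff ℝ 1 (sinhCutoff ε) := by
  unfold sinhCutoff; fun_prop

theorem hasDerivAt_sinhCutoff (ε y : ℝ) :
    HasDerivAt (sinhCutoff ε) (sinhCutoffDeriv ε y) y := by
  have h := (hasDerivAt_sinh y).mul ((hasDerivAt_cosh y).const_mul ε).neg.exp
  refine h.congr_deriv ?_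
  simp only [sinhCutoffDeriv, Pi.neg_apply]
  ring

theorem deriv_sinhCutoff_comp_mul (ε c : ℝ) :
    deriv (fun x => sinhCutoff ε (c * x)) = fun x => c * sinhCutoffDeriv ε (c * x) := by
  funext x
  refine ((hasDerivAt_sinhCutoff ε _).comp x ((hasDerivAt_id' x).const_mul c)).deriv.trans ?_
  ring

theorem abs_sinhCutoff_le {ε : ℝ} (hε : 0 ≤ ε) (y : ℝ) :
    |sinhCutoff ε y| ≤ coshCutoffBound ε y := by
  have := cosh_pos y
  rw [sinhCutoff, coshCutoffBound, abs_mul, abs_of_pos (exp_pos _)]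
  gcongr
  calc |sinh y| ≤ cosh y := abs_sinh_le_cosh y
    _ ≤ cosh y * (1 + ε * cosh y) := le_mul_of_one_le_right this.le (by nlinarith)

theorem abs_sinhCutoffDeriv_le {ε : ℝ} (hε : 0 ≤ ε) (y : ℝ) :
    |sinhCutoffDeriv ε y| ≤ coshCutoffBound ε y := by
  have := cosh_pos y
  have hsinh : sinh y ^ 2 ≤ cosh y ^ 2 := by linarith [cosh_sq' y]
  rw [sinhCutoffDeriv, coshCutoffBound, abs_mul, abs_of_pos (exp_pos _)]
  gcongr
  rw [abs_le]
  constructor <;> nlinarith [sq_nonneg (sinh y)]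

theorem coshCutoffBound_le_cosh (ε y : ℝ) : coshCutoffBound ε y ≤ cosh y := by
  rw [coshCutoffBound, mul_assoc]
  exact mul_le_of_le_one_right (cosh_pos y).le (one_add_mul_exp_neg_le_one _)

theorem coshCutoffBound_le_two_div {ε : ℝ} (hε : 0 < ε) (y : ℝ) :
    coshCutoffBound ε y ≤ 2 / ε := by
  rw [le_div_iff₀' hε]
  calc ε * coshCutoffBound ε y = ε * cosh y * (1 + ε * cosh y) * exp (-(ε * cosh y)) := by
        rw [coshCutoffBound]; ring
    _ ≤ 2 := mul_one_add_mul_exp_neg_le_two (by positivity)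

theorem continuousWithinAt_integral_sq_div_cosh_pow_four {F : ℝ → ℝ → ℝ}
    (hF : Continuous fun p : ℝ × ℝ => F p.1 p.2)
    (hbound : ∀ ε ≥ 0, ∀ y, |F ε y| ≤ cosh y) :
    ContinuousWithinAt (fun ε => ∫ y, F ε y ^ 2 / cosh y ^ 4) (Ici 0) 0 := by
  refine continuousWithinAt_of_dominated (bound := fun y => (cosh y ^ 2)⁻¹)
    (Eventually.of_forall fun ε => ?_) (eventually_nhdsWithin_of_forall fun ε hε => ?_)
    integrable_inv_cosh_sq (Eventually.of_forall fun y => ?_)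
  · have := (hF.comp (Continuous.prodMk_right ε)).measurable
    exact (by fun_prop : Measurable fun y => F ε y ^ 2 / cosh y ^ 4).aestronglyMeasurable
  · refine Eventually.of_forall fun y => ?_
    rw [norm_of_nonneg (by positivity)]
    exact sq_div_cosh_pow_four_le (hbound ε hε y)
  · exact ((hF.comp (Continuous.prodMk_left y)).pow 2 |>.div_const _).continuousWithinAt

theorem one_third_le_of_sinhCutoff_quotient_le {C : ℝ}
    (h : ∀ ε > 0, ∫ y, sinhCutoff ε y ^ 2 / cosh y ^ 4
      ≤ C * ∫ y, sinhCutoffDeriv ε y ^ 2 / cosh y ^ 4) :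
    1 / 3 ≤ C := by
  have hN := continuousWithinAt_integral_sq_div_cosh_pow_four continuous_sinhCutoff
    fun ε hε y => (abs_sinhCutoff_le hε y).trans (coshCutoffBound_le_cosh ε y)
  have hD := continuousWithinAt_integral_sq_div_cosh_pow_four continuous_sinhCutoffDeriv
    fun ε hε y => (abs_sinhCutoffDeriv_le hε y).trans (coshCutoffBound_le_cosh ε y)
  have hcosh (y : ℝ) : cosh y ^ 2 / cosh y ^ 4 = (cosh y ^ 2)⁻¹ := by
    have := (cosh_pos y).ne'
    field_simp
  simp only [ContinuousWithinAt, sinhCutoff, sinhCutoffDeriv, zero_mul, neg_zero, exp_zero,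
    mul_one, sub_zero, hcosh, integral_sinh_sq_div_cosh_pow_four, integral_inv_cosh_sq] at hN hD
  have := le_of_tendsto_of_tendsto (hN.mono_left (nhdsWithin_mono _ Ioi_subset_Ici_self))
    ((hD.mono_left (nhdsWithin_mono _ Ioi_subset_Ici_self)).const_mul C)
    (eventually_nhdsWithin_of_forall h)
  linarith

theorem twW_eq (ν b x : ℝ) : twW ν b x = waveK ν b / 4 / cosh (waveK ν b / 2 * x) ^ 2 := by
  set k := waveK ν b
  have hexp : exp (-k * x) = exp (-(k / 2 * x)) ^ 2 := by rw [← exp_nat_mul]; ring_nf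
  have := exp_pos (k / 2 * x)
  rw [twW, twProfile, cosh_eq, hexp, exp_neg]
  field_simp
  ring

theorem twW_neg (ν b x : ℝ) : twW ν b (-x) = twW ν b x := by
  rw [twW_eq, twW_eq, mul_neg, cosh_neg]

theorem integral_sq_comp_mul_mul_twW_sq {ν b : ℝ} (hk : 0 < waveK ν b) (g : ℝ → ℝ) :
    ∫ x, g (waveK ν b / 2 * x) ^ 2 * twW ν b x ^ 2
      = waveK ν b / 8 * ∫ y, g y ^ 2 / cosh y ^ 4 := by
  set k := waveK ν b
  have hpt (x : ℝ) : g (k / 2 * x) ^ 2 * twW ν b x ^ 2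
      = (k / 4) ^ 2 * (g (k / 2 * x) ^ 2 / cosh (k / 2 * x) ^ 4) := by
    rw [twW_eq]; ring
  simp_rw [hpt]
  rw [integral_const_mul, Measure.integral_comp_mul_left (fun y => g y ^ 2 / cosh y ^ 4),
    abs_of_pos (by positivity), smul_eq_mul]
  field_simp
  ring

theorem poincare_constant_sharp_general
    (ν b : ℝ) (hν : 0 < ν) (hb : 0 < b)
    (κ : ℝ)
    (hpoincare : ∀ h : ℝ → ℝ, ContDiff ℝ 1 h →
      (∃ M : ℝ, ∀ x : ℝ, |h x| ≤ M) →
      (∃ M : ℝ, ∀ x : ℝ, |deriv h x| ≤ M) →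
      (∫ x : ℝ, h x * (twW ν b x) ^ 2) = 0 →
      (∫ x : ℝ, (h x) ^ 2 * (twW ν b x) ^ 2)
        ≤ κ * ∫ x : ℝ, (deriv h x) ^ 2 * (twW ν b x) ^ 2) :
    4 / (3 * waveK ν b ^ 2) ≤ κ := by
  set k := waveK ν b
  have hk : 0 < k := sqrt_pos.mpr (by positivity)
  have hquot : 1 / 3 ≤ κ * (k / 2) ^ 2 := one_third_le_of_sinhCutoff_quotient_le fun ε hε => by
    have h := hpoincare (fun x => sinhCutoff ε (k / 2 * x))
      ((contDiff_sinhCutoff ε).comp (contDiff_const.mul contDiff_id))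
      ⟨2 / ε, fun x => (abs_sinhCutoff_le hε.le _).trans (coshCutoffBound_le_two_div hε _)⟩
      ⟨k / 2 * (2 / ε), fun x => by
        rw [deriv_sinhCutoff_comp_mul, abs_mul, abs_of_pos (by positivity)]
        gcongr
        exact (abs_sinhCutoffDeriv_le hε.le _).trans (coshCutoffBound_le_two_div hε _)⟩
      (integral_eq_zero_of_odd fun x => by rw [twW_neg, mul_neg, sinhCutoff_odd, neg_mul])
    rw [deriv_sinhCutoff_comp_mul, integral_sq_comp_mul_mul_twW_sq hk,
      integral_sq_comp_mul_mul_twW_sq hk fun y => k / 2 * sinhCutoffDeriv ε y] at h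
    simp_rw [mul_pow, mul_div_assoc, integral_const_mul] at h
    exact le_of_mul_le_mul_left (h.trans_eq (by ring)) (by positivity : 0 < k / 8)
  rw [div_le_iff₀ (by positivity)]
  linarith

/-- sharpness of the Poincaré constant: if `κ ≥ 0` is such that
`∫ h² w² ≤ κ ∫ h'² w²` for every bounded `C¹` function `h` with bounded derivative
and `∫ h w² = 0`, then `κ ≥ 4/(3k²)`. -/
theorem poincare_constant_sharp
    (ν b a : ℝ) (hν : 0 < ν) (hb : 0 < b) (ha : a ∈ Set.Ioo (0 : ℝ) 1)
    (κ : ℝ) (hκ : 0 ≤ κ)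
    (hpoincare : ∀ h : ℝ → ℝ, ContDiff ℝ 1 h →
      (∃ M : ℝ, ∀ x : ℝ, |h x| ≤ M) →
      (∃ M : ℝ, ∀ x : ℝ, |deriv h x| ≤ M) →
      (∫ x : ℝ, h x * (twW ν b x) ^ 2) = 0 →
      (∫ x : ℝ, (h x) ^ 2 * (twW ν b x) ^ 2)
        ≤ κ * ∫ x : ℝ, (deriv h x) ^ 2 * (twW ν b x) ^ 2) :
    4 / (3 * waveK ν b ^ 2) ≤ κ :=
  poincare_constant_sharp_general ν b hν hb κ hpoincare
end

section
/- (Half-line Poincaré inequality) Let h : [0,∞) → ℝ be continuously differentiable with h and h' bounded. Then ∫_0^∞ (h(x) - h(0))² w(x)² dx ≤ (4/(3k²)) ∫_0^∞ h'(x)² w(x)² dx. -/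
/-
Put `W = w²` and `Ψ = (k/2) coth (k x / 2) · W`. On `(0, ∞)` these satisfy the Riccati identity
`Ψ' W = -Ψ² - (3/4) k² W²`, so completing the square gives, pointwise for `g = h - h 0`,
`(3/4) k² g² W ≤ g'² W - (g² Ψ)'`. Since `|g| ≤ sup |h'| · x` and `x Ψ ≤ (k²/2) e^{-k x}`, the
boundary term `g² Ψ` is `O(x e^{-k x})` and vanishes at both ends, so integrating over `(0, ∞)`
gives the inequality. This and the integrability estimates all reduce to
`(k x)² e^{-k x} ≤ (1 - e^{-k x})²`, which is `sinh s ≥ s` for `s = k x / 2`.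
-/

open Real MeasureTheory

open Set Filter Topology

section Riccati

variable {a c : ℝ} {W Ψ Ψ' g g' : ℝ → ℝ}

lemma mul_sq_mul_le_of_riccati {w ψ ψ' c u v : ℝ} (hw : 0 < w)
    (hric : ψ' * w ≤ -ψ ^ 2 - c * w ^ 2) :
    c * (u ^ 2 * w) ≤ v ^ 2 * w - (2 * u * v * ψ + u ^ 2 * ψ') := by
  rw [← mul_le_mul_iff_of_pos_right hw]
  nlinarith [sq_nonneg (v * w - u * ψ), mul_le_mul_of_nonneg_left hric (sq_nonneg u)]

theorem mul_integral_sq_mul_le_of_riccati (hW : ∀ x ∈ Ioi a, 0 < W x)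
    (hΨ : ∀ x ∈ Ioi a, HasDerivAt Ψ (Ψ' x) x)
    (hric : ∀ x ∈ Ioi a, Ψ' x * W x ≤ -Ψ x ^ 2 - c * W x ^ 2)
    (hg : ∀ x ∈ Ioi a, HasDerivAt g (g' x) x) (hga : g a = 0)
    (hF_right : Tendsto (fun x ↦ g x ^ 2 * Ψ x) (𝓝[>] a) (𝓝 0))
    (hF_top : Tendsto (fun x ↦ g x ^ 2 * Ψ x) atTop (𝓝 0))
    (hF' : IntegrableOn (fun x ↦ 2 * g x * g' x * Ψ x + g x ^ 2 * Ψ' x) (Ioi a))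
    (hgW : IntegrableOn (fun x ↦ g x ^ 2 * W x) (Ioi a))
    (hg'W : IntegrableOn (fun x ↦ g' x ^ 2 * W x) (Ioi a)) :
    c * ∫ x in Ioi a, g x ^ 2 * W x ≤ ∫ x in Ioi a, g' x ^ 2 * W x := by
  have hF_cont : ContinuousWithinAt (fun x ↦ g x ^ 2 * Ψ x) (Ici a) a := by
    rw [← continuousWithinAt_Ioi_iff_Ici, ContinuousWithinAt, hga]
    simpa using hF_right
  have hFTC : ∫ x in Ioi a, (2 * g x * g' x * Ψ x + g x ^ 2 * Ψ' x) = 0 := by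
    rw [integral_Ioi_of_hasDerivAt_of_tendsto hF_cont
      (fun x hx ↦ (((hg x hx).pow 2).mul (hΨ x hx)).congr_deriv
        (by simp only [Pi.pow_apply]; ring)) hF' hF_top, hga]
    simp
  calc c * ∫ x in Ioi a, g x ^ 2 * W x = ∫ x in Ioi a, c * (g x ^ 2 * W x) :=
        (integral_const_mul _ _).symm
    _ ≤ ∫ x in Ioi a, (g' x ^ 2 * W x - (2 * g x * g' x * Ψ x + g x ^ 2 * Ψ' x)) :=
        setIntegral_mono_on (hgW.const_mul c) (hg'W.sub hF') measurableSet_Ioi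
          fun x hx ↦ mul_sq_mul_le_of_riccati (hW x hx) (hric x hx)
    _ = ∫ x in Ioi a, g' x ^ 2 * W x := by rw [integral_sub hg'W hF', hFTC, sub_zero]

end Riccati

lemma integrableOn_Ioi_of_abs_le_mul_exp_neg {f : ℝ → ℝ} {a k C : ℝ} (hk : 0 < k)
    (hf : AEStronglyMeasurable f (volume.restrict (Ioi a)))
    (hle : ∀ x ∈ Ioi a, |f x| ≤ C * rexp (-k * x)) : IntegrableOn f (Ioi a) :=
  ((exp_neg_integrableOn_Ioi a hk).const_mul C).mono' hf
    ((ae_restrict_iff' measurableSet_Ioi).2 (ae_of_all _ hle))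

lemma sq_mul_exp_neg_le_sq_one_sub_exp_neg {t : ℝ} (ht : 0 ≤ t) :
    t ^ 2 * rexp (-t) ≤ (1 - rexp (-t)) ^ 2 := by
  have hsinh : t / 2 ≤ sinh (t / 2) := self_le_sinh_iff.2 (by positivity)
  have hexp : (1 - rexp (-t)) ^ 2 = rexp (-t) * (2 * sinh (t / 2)) ^ 2 := by
    have hsq : rexp (-t) = rexp (-(t / 2)) ^ 2 := by rw [← exp_nat_mul]; ring_nf
    have hinv : rexp (t / 2) * rexp (-(t / 2)) = 1 := by rw [← exp_add]; simp
    rw [sinh_eq, hsq]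
    linear_combination (-(1 + rexp (t / 2) * rexp (-(t / 2)) - 2 * rexp (-(t / 2)) ^ 2)) * hinv
  rw [hexp, mul_comm]
  gcongr
  linarith

section Weight

variable {k x : ℝ}

noncomputable def weightSq (k x : ℝ) : ℝ :=
  k ^ 2 * rexp (-k * x) ^ 2 / (1 + rexp (-k * x)) ^ 4

-- `riccatiPsi k x = (k / 2) * coth (k * x / 2) * weightSq k x`
noncomputable def riccatiPsi (k x : ℝ) : ℝ :=
  k ^ 3 * rexp (-k * x) ^ 2 / (2 * (1 - rexp (-k * x)) * (1 + rexp (-k * x)) ^ 3)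

noncomputable def riccatiPsiDeriv (k x : ℝ) : ℝ :=
  -(k ^ 4 * rexp (-k * x) ^ 2 * (rexp (-k * x) ^ 2 - rexp (-k * x) + 1)) /
    ((1 - rexp (-k * x)) ^ 2 * (1 + rexp (-k * x)) ^ 4)

lemma twW_sq (ν b x : ℝ) : twW ν b x ^ 2 = weightSq (waveK ν b) x := by
  have : 0 < 1 + rexp (-waveK ν b * x) := by positivity
  rw [twW, twProfile, weightSq]
  field_simp
  ring

lemma one_sub_exp_neg_mul_ne_zero (hk : k ≠ 0) (hx : x ≠ 0) : 1 - rexp (-k * x) ≠ 0 := by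
  rw [sub_ne_zero, ne_comm, Ne, Real.exp_eq_one_iff]
  simp [hk, hx]

lemma hasDerivAt_riccatiPsi (hk : k ≠ 0) (hx : x ≠ 0) :
    HasDerivAt (riccatiPsi k) (riccatiPsiDeriv k x) x := by
  have hE : HasDerivAt (fun y ↦ rexp (-k * y)) (-k * rexp (-k * x)) x := by
    simpa [mul_comm] using ((hasDerivAt_id x).const_mul (-k)).exp
  have h1 := one_sub_exp_neg_mul_ne_zero hk hx
  have h2 : 1 + rexp (-k * x) ≠ 0 := by positivity
  refine (((hE.pow 2).const_mul (k ^ 3)).div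
    (((hE.const_sub 1).const_mul 2).mul ((hE.const_add 1).pow 3))
    (mul_ne_zero (mul_ne_zero two_ne_zero h1) (pow_ne_zero 3 h2))).congr_deriv ?_
  simp only [Pi.mul_apply, Pi.pow_apply, riccatiPsiDeriv]
  set E := rexp (-k * x)
  field_simp
  ring

lemma riccatiPsiDeriv_mul_weightSq (hk : k ≠ 0) (hx : x ≠ 0) :
    riccatiPsiDeriv k x * weightSq k x =
      -riccatiPsi k x ^ 2 - 3 / 4 * k ^ 2 * weightSq k x ^ 2 := by
  have h1 := one_sub_exp_neg_mul_ne_zero hk hx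
  have h2 : 1 + rexp (-k * x) ≠ 0 := by positivity
  rw [riccatiPsiDeriv, weightSq, riccatiPsi]
  set E := rexp (-k * x)
  field_simp
  ring

lemma weightSq_pos (hk : k ≠ 0) (x : ℝ) : 0 < weightSq k x := by
  unfold weightSq; positivity

lemma riccatiPsiDeriv_nonpos (k x : ℝ) : riccatiPsiDeriv k x ≤ 0 := by
  have : 0 < rexp (-k * x) ^ 2 - rexp (-k * x) + 1 := by
    nlinarith [sq_nonneg (rexp (-k * x) - 1)]
  unfold riccatiPsiDeriv
  exact div_nonpos_of_nonpos_of_nonneg (neg_nonpos.2 (by positivity)) (by positivity)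

lemma exp_neg_mul_lt_one (hk : 0 < k) (hx : 0 < x) : rexp (-k * x) < 1 :=
  exp_lt_one_iff.2 (by nlinarith)

lemma sq_mul_mul_exp_neg_mul_le (hk : 0 < k) (hx : 0 < x) :
    (k * x) ^ 2 * rexp (-k * x) ≤ (1 - rexp (-k * x)) ^ 2 := by
  simpa [neg_mul] using sq_mul_exp_neg_le_sq_one_sub_exp_neg (mul_pos hk hx).le

lemma mul_mul_exp_neg_mul_le (hk : 0 < k) (hx : 0 < x) :
    k * x * rexp (-k * x) ≤ 1 - rexp (-k * x) := by
  have hE1 := exp_neg_mul_lt_one hk hx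
  have hE0 := exp_pos (-k * x)
  refine (pow_le_pow_iff_left₀ (by positivity) (by linarith) two_ne_zero).1 ?_
  calc (k * x * rexp (-k * x)) ^ 2 = (k * x) ^ 2 * rexp (-k * x) * rexp (-k * x) := by ring
    _ ≤ (1 - rexp (-k * x)) ^ 2 * 1 := by
      gcongr
      exact sq_mul_mul_exp_neg_mul_le hk hx
    _ = (1 - rexp (-k * x)) ^ 2 := mul_one _

lemma riccatiPsi_nonneg (hk : 0 < k) (hx : 0 < x) : 0 ≤ riccatiPsi k x := by
  have := sub_pos.2 (exp_neg_mul_lt_one hk hx)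
  unfold riccatiPsi
  positivity

lemma weightSq_le (hk : 0 < k) (hx : 0 < x) : weightSq k x ≤ k ^ 2 * rexp (-k * x) := by
  have hE1 := exp_neg_mul_lt_one hk hx
  have hE0 := exp_pos (-k * x)
  rw [weightSq, div_le_iff₀ (by positivity)]
  calc k ^ 2 * rexp (-k * x) ^ 2 = k ^ 2 * rexp (-k * x) * rexp (-k * x) := by ring
    _ ≤ k ^ 2 * rexp (-k * x) * (1 + rexp (-k * x)) ^ 4 := by
      gcongr
      exact hE1.le.trans (one_le_pow₀ (by linarith))

lemma sq_mul_weightSq_le (hk : 0 < k) (hx : 0 < x) : x ^ 2 * weightSq k x ≤ rexp (-k * x) := by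
  have hE1 := exp_neg_mul_lt_one hk hx
  have hE0 := exp_pos (-k * x)
  rw [weightSq, mul_div_assoc', div_le_iff₀ (by positivity)]
  calc x ^ 2 * (k ^ 2 * rexp (-k * x) ^ 2) = (k * x) ^ 2 * rexp (-k * x) * rexp (-k * x) := by
        ring
    _ ≤ (1 - rexp (-k * x)) ^ 2 * rexp (-k * x) := by
      gcongr; exact sq_mul_mul_exp_neg_mul_le hk hx
    _ ≤ 1 * rexp (-k * x) := by gcongr; nlinarith
    _ ≤ rexp (-k * x) * (1 + rexp (-k * x)) ^ 4 := by
      rw [one_mul]; exact le_mul_of_one_le_right hE0.le (one_le_pow₀ (by linarith))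

lemma mul_riccatiPsi_le (hk : 0 < k) (hx : 0 < x) :
    x * riccatiPsi k x ≤ k ^ 2 / 2 * rexp (-k * x) := by
  have hE1 := exp_neg_mul_lt_one hk hx
  have hE0 := exp_pos (-k * x)
  have h1E := sub_pos.2 hE1
  rw [riccatiPsi, mul_div_assoc', div_le_iff₀ (by positivity)]
  calc x * (k ^ 3 * rexp (-k * x) ^ 2) = k ^ 2 * rexp (-k * x) * (k * x * rexp (-k * x)) := by
        ring
    _ ≤ k ^ 2 * rexp (-k * x) * (1 - rexp (-k * x)) := by
      gcongr; exact mul_mul_exp_neg_mul_le hk hx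
    _ ≤ k ^ 2 * rexp (-k * x) * ((1 - rexp (-k * x)) * (1 + rexp (-k * x)) ^ 3) := by
      gcongr; exact le_mul_of_one_le_right h1E.le (one_le_pow₀ (by linarith))
    _ = k ^ 2 / 2 * rexp (-k * x) * (2 * (1 - rexp (-k * x)) * (1 + rexp (-k * x)) ^ 3) := by
      ring

lemma sq_mul_neg_riccatiPsiDeriv_le (hk : 0 < k) (hx : 0 < x) :
    x ^ 2 * -riccatiPsiDeriv k x ≤ k ^ 2 * rexp (-k * x) := by
  have hE1 := exp_neg_mul_lt_one hk hx
  have hE0 := exp_pos (-k * x)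
  have h1E := sub_pos.2 hE1
  have hq : rexp (-k * x) ^ 2 - rexp (-k * x) + 1 ≤ 1 := by nlinarith
  rw [riccatiPsiDeriv, neg_div, neg_neg, mul_div_assoc', div_le_iff₀ (by positivity)]
  calc x ^ 2 * (k ^ 4 * rexp (-k * x) ^ 2 * (rexp (-k * x) ^ 2 - rexp (-k * x) + 1))
      = k ^ 2 * rexp (-k * x) * ((k * x) ^ 2 * rexp (-k * x)) *
          (rexp (-k * x) ^ 2 - rexp (-k * x) + 1) := by ring
    _ ≤ k ^ 2 * rexp (-k * x) * (1 - rexp (-k * x)) ^ 2 * 1 := by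
      gcongr
      · nlinarith
      · exact sq_mul_mul_exp_neg_mul_le hk hx
    _ ≤ k ^ 2 * rexp (-k * x) * ((1 - rexp (-k * x)) ^ 2 * (1 + rexp (-k * x)) ^ 4) := by
      rw [mul_one, ← mul_assoc]
      exact le_mul_of_one_le_right (by positivity) (one_le_pow₀ (by linarith))

lemma sq_le_sq_mul_of_abs_le {u L : ℝ} (hu : |u| ≤ L * x) : u ^ 2 ≤ L ^ 2 * x ^ 2 := by
  rw [← mul_pow]; exact sq_le_sq' (abs_le.1 hu).1 (abs_le.1 hu).2

lemma abs_sq_mul_riccatiPsi_le (hk : 0 < k) (hx : 0 < x) {u L : ℝ} (hu : |u| ≤ L * x) :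
    |u ^ 2 * riccatiPsi k x| ≤ L ^ 2 * k ^ 2 / 2 * (x * rexp (-k * x)) := by
  have hΨ := riccatiPsi_nonneg hk hx
  rw [abs_of_nonneg (by positivity)]
  calc u ^ 2 * riccatiPsi k x ≤ L ^ 2 * x ^ 2 * riccatiPsi k x := by
        gcongr; exact sq_le_sq_mul_of_abs_le hu
    _ = L ^ 2 * x * (x * riccatiPsi k x) := by ring
    _ ≤ L ^ 2 * x * (k ^ 2 / 2 * rexp (-k * x)) :=
        mul_le_mul_of_nonneg_left (mul_riccatiPsi_le hk hx) (by positivity)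
    _ = _ := by ring

lemma abs_deriv_sq_mul_riccatiPsi_le (hk : 0 < k) (hx : 0 < x) {u v L : ℝ}
    (hu : |u| ≤ L * x) (hv : |v| ≤ L) :
    |2 * u * v * riccatiPsi k x + u ^ 2 * riccatiPsiDeriv k x| ≤
      2 * L ^ 2 * k ^ 2 * rexp (-k * x) := by
  have hΨ := riccatiPsi_nonneg hk hx
  have hΨ' := riccatiPsiDeriv_nonpos k x
  have hL : 0 ≤ L := (abs_nonneg v).trans hv
  have h1 : |2 * u * v * riccatiPsi k x| ≤ L ^ 2 * k ^ 2 * rexp (-k * x) := by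
    rw [abs_mul, abs_mul, abs_mul, abs_two, abs_of_nonneg hΨ]
    calc 2 * |u| * |v| * riccatiPsi k x ≤ 2 * (L * x) * L * riccatiPsi k x := by gcongr
      _ = 2 * L ^ 2 * (x * riccatiPsi k x) := by ring
      _ ≤ 2 * L ^ 2 * (k ^ 2 / 2 * rexp (-k * x)) :=
        mul_le_mul_of_nonneg_left (mul_riccatiPsi_le hk hx) (by positivity)
      _ = _ := by ring
  have h2 : |u ^ 2 * riccatiPsiDeriv k x| ≤ L ^ 2 * k ^ 2 * rexp (-k * x) := by
    rw [abs_mul, abs_of_nonneg (sq_nonneg u), abs_of_nonpos hΨ']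
    calc u ^ 2 * -riccatiPsiDeriv k x ≤ L ^ 2 * x ^ 2 * -riccatiPsiDeriv k x := by
          gcongr
          · linarith
          · exact sq_le_sq_mul_of_abs_le hu
      _ = L ^ 2 * (x ^ 2 * -riccatiPsiDeriv k x) := by ring
      _ ≤ L ^ 2 * (k ^ 2 * rexp (-k * x)) :=
        mul_le_mul_of_nonneg_left (sq_mul_neg_riccatiPsiDeriv_le hk hx) (by positivity)
      _ = _ := by ring
  linarith [abs_add_le (2 * u * v * riccatiPsi k x) (u ^ 2 * riccatiPsiDeriv k x)]

lemma sq_mul_weightSq_le_of_abs_le_mul (hk : 0 < k) (hx : 0 < x) {u L : ℝ}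
    (hu : |u| ≤ L * x) :
    u ^ 2 * weightSq k x ≤ L ^ 2 * rexp (-k * x) := by
  have hW := (weightSq_pos hk.ne' x).le
  calc u ^ 2 * weightSq k x ≤ L ^ 2 * x ^ 2 * weightSq k x := by
        gcongr; exact sq_le_sq_mul_of_abs_le hu
    _ = L ^ 2 * (x ^ 2 * weightSq k x) := by ring
    _ ≤ L ^ 2 * rexp (-k * x) := by gcongr; exact sq_mul_weightSq_le hk hx

lemma sq_mul_weightSq_le_of_abs_le (hk : 0 < k) (hx : 0 < x) {v L : ℝ} (hv : |v| ≤ L) :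
    v ^ 2 * weightSq k x ≤ L ^ 2 * k ^ 2 * rexp (-k * x) := by
  have hW := (weightSq_pos hk.ne' x).le
  calc v ^ 2 * weightSq k x ≤ L ^ 2 * weightSq k x :=
        mul_le_mul_of_nonneg_right (sq_le_sq' (abs_le.1 hv).1 (abs_le.1 hv).2) hW
    _ ≤ L ^ 2 * (k ^ 2 * rexp (-k * x)) := by gcongr; exact weightSq_le hk hx
    _ = L ^ 2 * k ^ 2 * rexp (-k * x) := by ring

theorem mul_integral_sq_mul_weightSq_le {k L : ℝ} {g g' : ℝ → ℝ} (hk : 0 < k)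
    (hg : ∀ x ∈ Ioi 0, HasDerivAt g (g' x) x) (hg0 : g 0 = 0)
    (hg'_meas : AEStronglyMeasurable g' (volume.restrict (Ioi 0)))
    (hgL : ∀ x ∈ Ioi 0, |g x| ≤ L * x) (hg'L : ∀ x ∈ Ioi 0, |g' x| ≤ L) :
    3 / 4 * k ^ 2 * ∫ x in Ioi 0, g x ^ 2 * weightSq k x ≤
      ∫ x in Ioi 0, g' x ^ 2 * weightSq k x := by
  have hΨ : ∀ x ∈ Ioi (0 : ℝ), HasDerivAt (riccatiPsi k) (riccatiPsiDeriv k x) x :=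
    fun x hx ↦ hasDerivAt_riccatiPsi hk.ne' (ne_of_gt hx)
  have hg_meas : AEStronglyMeasurable g (volume.restrict (Ioi 0)) :=
    ContinuousOn.aestronglyMeasurable (fun x hx ↦ (hg x hx).continuousAt.continuousWithinAt)
      measurableSet_Ioi
  have hΨ_meas : AEStronglyMeasurable (riccatiPsi k) (volume.restrict (Ioi 0)) :=
    ContinuousOn.aestronglyMeasurable (fun x hx ↦ (hΨ x hx).continuousAt.continuousWithinAt)
      measurableSet_Ioi
  have hΨ'_meas : Measurable (riccatiPsiDeriv k) := by unfold riccatiPsiDeriv; fun_prop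
  have hW_meas : Measurable (weightSq k) := by unfold weightSq; fun_prop
  have hF_le : ∀ x ∈ Ioi (0 : ℝ),
      ‖g x ^ 2 * riccatiPsi k x‖ ≤ L ^ 2 * k ^ 2 / 2 * (x * rexp (-k * x)) :=
    fun x hx ↦ abs_sq_mul_riccatiPsi_le hk hx (hgL x hx)
  refine mul_integral_sq_mul_le_of_riccati (fun x _ ↦ weightSq_pos hk.ne' x) hΨ
    (fun x hx ↦ (riccatiPsiDeriv_mul_weightSq hk.ne' (ne_of_gt hx)).le) hg hg0 ?_ ?_ ?_ ?_ ?_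
  · refine squeeze_zero_norm' (eventually_nhdsWithin_of_forall hF_le) ?_
    exact tendsto_nhdsWithin_of_tendsto_nhds ((by fun_prop : Continuous
      fun x : ℝ ↦ L ^ 2 * k ^ 2 / 2 * (x * rexp (-k * x))).tendsto' 0 0 (by simp))
  · refine squeeze_zero_norm' ((eventually_gt_atTop 0).mono hF_le) ?_
    simpa using
      (tendsto_rpow_mul_exp_neg_mul_atTop_nhds_zero 1 k hk).const_mul (L ^ 2 * k ^ 2 / 2)
  · exact integrableOn_Ioi_of_abs_le_mul_exp_neg hk
      ((((hg_meas.const_mul 2).mul hg'_meas).mul hΨ_meas).add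
        ((hg_meas.pow 2).mul hΨ'_meas.aestronglyMeasurable))
      fun x hx ↦ abs_deriv_sq_mul_riccatiPsi_le hk hx (hgL x hx) (hg'L x hx)
  · exact integrableOn_Ioi_of_abs_le_mul_exp_neg hk
      ((hg_meas.pow 2).mul hW_meas.aestronglyMeasurable) fun x hx ↦ by
        rw [abs_of_nonneg (by positivity [weightSq_pos hk.ne' x])]
        exact sq_mul_weightSq_le_of_abs_le_mul hk hx (hgL x hx)
  · exact integrableOn_Ioi_of_abs_le_mul_exp_neg hk
      ((hg'_meas.pow 2).mul hW_meas.aestronglyMeasurable) fun x hx ↦ by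
        rw [abs_of_nonneg (by positivity [weightSq_pos hk.ne' x])]
        exact sq_mul_weightSq_le_of_abs_le hk hx (hg'L x hx)

end Weight

theorem half_line_poincare_general
    (ν b : ℝ) (hν : 0 < ν) (hb : 0 < b)
    (h : ℝ → ℝ) (hh : ContDiffOn ℝ 1 h (Set.Ici 0))
    (hbdd' : ∃ M : ℝ, ∀ x ∈ Set.Ici (0 : ℝ), |derivWithin h (Set.Ici 0) x| ≤ M) :
    ∫ x in Set.Ioi (0 : ℝ), (h x - h 0) ^ 2 * (twW ν b x) ^ 2
    ≤ (4 / (3 * waveK ν b ^ 2))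
        * ∫ x in Set.Ioi (0 : ℝ), (derivWithin h (Set.Ici 0) x) ^ 2 * (twW ν b x) ^ 2 := by
  obtain ⟨L, hL⟩ := hbdd'
  have hk : 0 < waveK ν b := Real.sqrt_pos.2 (by positivity)
  have hdiff := hh.differentiableOn one_ne_zero
  have hlin : ∀ x ∈ Ioi (0 : ℝ), |h x - h 0| ≤ L * x := fun x (hx : 0 < x) ↦ by
    simpa [abs_of_pos hx] using (convex_Ici 0).norm_image_sub_le_of_norm_derivWithin_le hdiff
      hL self_mem_Ici (mem_Ici.2 hx.le)
  have key := mul_integral_sq_mul_weightSq_le (g := fun x ↦ h x - h 0) hk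
    (fun x (hx : 0 < x) ↦ ((hdiff x (mem_Ici.2 hx.le)).hasDerivWithinAt.hasDerivAt
      (Ici_mem_nhds hx)).sub_const (h 0))
    (sub_self _)
    (((hh.continuousOn_derivWithin (uniqueDiffOn_Ici 0) le_rfl).mono
      Ioi_subset_Ici_self).aestronglyMeasurable measurableSet_Ioi)
    hlin (fun x (hx : 0 < x) ↦ hL x (mem_Ici.2 hx.le))
  simp only [twW_sq]
  rw [div_mul_eq_mul_div, le_div_iff₀ (by positivity)]
  linarith

/-- half-line Poincaré inequality: for `h : [0,∞) → ℝ`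
continuously differentiable with `h` and `h'` bounded,
`∫_0^∞ (h - h(0))² w² ≤ (4/(3k²)) ∫_0^∞ (h')² w²`. -/
theorem half_line_poincare
    (ν b a : ℝ) (hν : 0 < ν) (hb : 0 < b) (ha : a ∈ Set.Ioo (0 : ℝ) 1)
    (h : ℝ → ℝ) (hh : ContDiffOn ℝ 1 h (Set.Ici 0))
    (hbdd : ∃ M : ℝ, ∀ x ∈ Set.Ici (0 : ℝ), |h x| ≤ M)
    (hbdd' : ∃ M : ℝ, ∀ x ∈ Set.Ici (0 : ℝ), |derivWithin h (Set.Ici 0) x| ≤ M) :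
    ∫ x in Set.Ioi (0 : ℝ), (h x - h 0) ^ 2 * (twW ν b x) ^ 2
    ≤ (4 / (3 * waveK ν b ^ 2))
        * ∫ x in Set.Ioi (0 : ℝ), (derivWithin h (Set.Ici 0) x) ^ 2 * (twW ν b x) ^ 2 :=
  half_line_poincare_general ν b hν hb h hh hbdd'
end

section
/- (Whole-line Hardy-type inequality) Let h : ℝ → ℝ be continuously differentiable with h and h' bounded. Then ∫_ℝ (h(x) - h(0))² w'(x)² dx ≤ ∫_ℝ h'(x)² w(x)² dx. -/
/-!
Write `w x = k σ(kx) (1 - σ(kx))` for the derivative of `x ↦ σ(kx)`, `σ` the sigmoid,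
and `t = 2σ(kx) - 1 = tanh (kx/2)`. On `(0, ∞)` the weight `A = k w² (1 + t²) / (2t)` solves
the Riccati equation `A' + (A/w)² + (w')² = 0`, so completing the square gives, for
`g = h - h 0`, `(g² A)' = 2 g g' A + g² A' ≤ g'² w² - g² w'²`. Integrating over `(0, ∞)`, the
boundary terms vanish: at `0` because `g 0 = 0` absorbs the simple pole of `A`, at `∞` because
`g` is bounded and `A` decays. The half-line `(-∞, 0)` follows by reflection, under which `w`
is even and `w'` is odd.
-/

open Real MeasureTheory

open Set Filter Topology

lemma tendsto_sq_div_nhdsNE_of_hasDerivAt {f g : ℝ → ℝ} {a f' g' : ℝ} (hf : HasDerivAt f f' a)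
    (hg : HasDerivAt g g' a) (hfa : f a = 0) (hga : g a = 0) (hf' : f' ≠ 0) :
    Tendsto (fun x => g x ^ 2 / f x) (𝓝[≠] a) (𝓝 0) := by
  have hlim : Tendsto (fun x => slope g a x ^ 2 * (x - a) / slope f a x) (𝓝[≠] a)
      (𝓝 (g' ^ 2 * (a - a) / f')) :=
    ((hg.tendsto_slope.pow 2).mul ((tendsto_id.sub_const a).mono_left nhdsWithin_le_nhds)).div
      hf.tendsto_slope hf'
  rw [sub_self, mul_zero, zero_div] at hlim
  refine hlim.congr' (eventually_nhdsWithin_of_forall fun x hx => ?_)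
  have hxa : x - a ≠ 0 := sub_ne_zero.2 hx
  simp only [slope_def_field, hfa, hga, sub_zero]
  field_simp

lemma sub_le_integral_Ioi_of_hasDerivAt_of_le {G G' F : ℝ → ℝ} {a l : ℝ}
    (hcont : ContinuousWithinAt G (Ici a) a) (hderiv : ∀ x ∈ Ioi a, HasDerivAt G (G' x) x)
    (hle : ∀ x ∈ Ioi a, G' x ≤ F x) (hF : IntegrableOn F (Ioi a))
    (htop : Tendsto G atTop (𝓝 l)) : l - G a ≤ ∫ x in Ioi a, F x := by
  refine le_of_tendsto_of_tendsto (htop.sub_const (G a))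
    (intervalIntegral_tendsto_integral_Ioi a hF tendsto_id) ?_
  filter_upwards [eventually_ge_atTop a] with b hab
  refine intervalIntegral.sub_le_integral_of_hasDeriv_right_of_le hab ?_
    (fun x hx => (hderiv x hx.1).hasDerivWithinAt)
    (((integrableOn_Ici_iff_integrableOn_Ioi (by finiteness)).2 hF).mono_set Icc_subset_Ici_self)
    (fun x hx => hle x hx.1)
  intro x hx
  rcases hx.1.eq_or_lt with rfl | hax
  · exact hcont.mono Icc_subset_Ici_self
  · exact (hderiv x hax).continuousAt.continuousWithinAt

lemma two_mul_mul_mul_add_sq_mul_le_of_riccati {g g' A A' w u : ℝ} (hw : w ≠ 0)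
    (hA' : A' = -(u ^ 2 + (A / w) ^ 2)) :
    2 * g * g' * A + g ^ 2 * A' ≤ g' ^ 2 * w ^ 2 - g ^ 2 * u ^ 2 := by
  have hsq : g' ^ 2 * w ^ 2 - g ^ 2 * u ^ 2 - (2 * g * g' * A + g ^ 2 * A')
      = (g' * w - g * (A / w)) ^ 2 := by
    rw [hA']
    field_simp
    ring
  linarith [sq_nonneg (g' * w - g * (A / w))]

noncomputable def sigmoidSlope (k x : ℝ) : ℝ := k * sigmoid (k * x) * (1 - sigmoid (k * x))

lemma hasDerivAt_sigmoid_const_mul (k x : ℝ) :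
    HasDerivAt (fun y => sigmoid (k * y)) (sigmoidSlope k x) x :=
  ((hasDerivAt_sigmoid (k * x)).comp x ((hasDerivAt_id x).const_mul k)).congr_deriv
    (by simp only [sigmoidSlope, mul_one]; ring)

lemma hasDerivAt_sigmoidSlope (k x : ℝ) :
    HasDerivAt (sigmoidSlope k) (-k * (2 * sigmoid (k * x) - 1) * sigmoidSlope k x) x := by
  have hσ := hasDerivAt_sigmoid_const_mul k x
  exact ((hσ.const_mul k).mul ((hasDerivAt_const x (1 : ℝ)).sub hσ)).congr_deriv
    (by simp only [sigmoidSlope, Pi.sub_apply]; ring)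

lemma deriv_sigmoidSlope (k x : ℝ) :
    deriv (sigmoidSlope k) x = -k * (2 * sigmoid (k * x) - 1) * sigmoidSlope k x :=
  (hasDerivAt_sigmoidSlope k x).deriv

lemma continuous_sigmoidSlope (k : ℝ) : Continuous (sigmoidSlope k) := by
  unfold sigmoidSlope
  fun_prop

lemma sigmoidSlope_neg (k x : ℝ) : sigmoidSlope k (-x) = sigmoidSlope k x := by
  simp only [sigmoidSlope, mul_neg, sigmoid_neg]
  ring

lemma deriv_sigmoidSlope_neg (k x : ℝ) :
    deriv (sigmoidSlope k) (-x) = -deriv (sigmoidSlope k) x := by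
  simp only [deriv_sigmoidSlope, sigmoidSlope_neg, mul_neg, sigmoid_neg]
  ring

lemma two_mul_sigmoid_sub_one_pos {k x : ℝ} (hk : 0 < k) (hx : 0 < x) :
    0 < 2 * sigmoid (k * x) - 1 := by
  have := sigmoid_lt (mul_pos hk hx)
  rw [sigmoid_zero] at this
  linarith

section sigmoidSlope

variable {k : ℝ}

lemma sigmoidSlope_pos (hk : 0 < k) (x : ℝ) : 0 < sigmoidSlope k x :=
  mul_pos (mul_pos hk (sigmoid_pos _)) (sub_pos.2 (sigmoid_lt_one _))

lemma sigmoidSlope_le (hk : 0 < k) (x : ℝ) : sigmoidSlope k x ≤ k := by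
  have h₀ := sigmoid_pos (k * x)
  have h₁ := sigmoid_lt_one (k * x)
  unfold sigmoidSlope
  nlinarith [mul_pos hk h₀]

lemma integrable_sigmoidSlope (hk : 0 < k) : Integrable (sigmoidSlope k) := by
  refine (continuous_sigmoidSlope k).locallyIntegrable
    |>.integrable_of_isBigO_atTop_of_norm_isNegInvariant
      (ae_of_all _ fun x => by simp [sigmoidSlope_neg]) (Asymptotics.isBigO_refl _ _)
      ⟨Ioi 0, Ioi_mem_atTop 0, ?_⟩
  exact integrableOn_Ioi_deriv_of_nonneg' (fun x _ => hasDerivAt_sigmoid_const_mul k x)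
    (fun x _ => (sigmoidSlope_pos hk x).le)
    (tendsto_sigmoid_atTop.comp (tendsto_id.const_mul_atTop hk))

lemma integrable_sq_mul_sigmoidSlope_sq (hk : 0 < k) {g : ℝ → ℝ} (hg : AEStronglyMeasurable g)
    (hgb : ∃ M, ∀ x, |g x| ≤ M) : Integrable (fun x => g x ^ 2 * sigmoidSlope k x ^ 2) := by
  obtain ⟨M, hM⟩ := hgb
  have hM2 (x : ℝ) : |g x| ^ 2 ≤ M ^ 2 := pow_le_pow_left₀ (abs_nonneg _) (hM x) 2
  refine ((integrable_sigmoidSlope hk).bdd_mul (c := M ^ 2 * k)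
    ((hg.pow 2).mul (continuous_sigmoidSlope k).aestronglyMeasurable)
    (ae_of_all _ fun x => ?_)).congr
    (ae_of_all _ fun x => by simp only [Pi.mul_apply, Pi.pow_apply]; ring)
  rw [Pi.mul_apply, Pi.pow_apply, norm_mul, Real.norm_eq_abs, Real.norm_eq_abs, abs_pow,
    abs_of_pos (sigmoidSlope_pos hk x)]
  exact mul_le_mul (hM2 x) (sigmoidSlope_le hk x) (sigmoidSlope_pos hk x).le
    ((sq_nonneg _).trans (hM2 x))

lemma integrable_sq_mul_deriv_sigmoidSlope_sq (hk : 0 < k) {g : ℝ → ℝ}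
    (hg : AEStronglyMeasurable g) (hgb : ∃ M, ∀ x, |g x| ≤ M) :
    Integrable (fun x => g x ^ 2 * deriv (sigmoidSlope k) x ^ 2) := by
  obtain ⟨M, hM⟩ := hgb
  refine (integrable_sq_mul_sigmoidSlope_sq hk
    (g := fun x => g x * (k * (2 * sigmoid (k * x) - 1)))
    (hg.mul (by fun_prop : Continuous _).aestronglyMeasurable) ⟨M * k, fun x => ?_⟩).congr
    (ae_of_all _ fun x => by simp only [deriv_sigmoidSlope]; ring)
  have ht : |2 * sigmoid (k * x) - 1| ≤ 1 := abs_le.2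
    ⟨by linarith [sigmoid_pos (k * x)], by linarith [sigmoid_lt_one (k * x)]⟩
  rw [abs_mul, abs_mul, abs_of_pos hk]
  exact mul_le_mul (hM x) (mul_le_of_le_one_right hk.le ht) (by positivity)
    ((abs_nonneg _).trans (hM x))

end sigmoidSlope

noncomputable def riccatiWeight (k x : ℝ) : ℝ :=
  k * sigmoidSlope k x ^ 2 * (1 + (2 * sigmoid (k * x) - 1) ^ 2) /
    (2 * (2 * sigmoid (k * x) - 1))

section riccatiWeight

variable {k : ℝ}

lemma hasDerivAt_riccatiWeight (hk : k ≠ 0) {x : ℝ} (hx : 2 * sigmoid (k * x) - 1 ≠ 0) :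
    HasDerivAt (riccatiWeight k)
      (-(deriv (sigmoidSlope k) x ^ 2 + (riccatiWeight k x / sigmoidSlope k x) ^ 2)) x := by
  have ht : HasDerivAt (fun y => 2 * sigmoid (k * y) - 1) (2 * sigmoidSlope k x) x :=
    ((hasDerivAt_sigmoid_const_mul k x).const_mul 2).sub_const 1
  have hw := hasDerivAt_sigmoidSlope k x
  have hσ₀ := (sigmoid_pos (k * x)).ne'
  have hσ₁ := sub_ne_zero.2 (sigmoid_lt_one (k * x)).ne'
  refine ((((hw.pow 2).const_mul k).mul ((ht.pow 2).const_add 1)).div (ht.const_mul 2)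
    (mul_ne_zero two_ne_zero hx)).congr_deriv ?_
  rw [deriv_sigmoidSlope]
  simp only [riccatiWeight, sigmoidSlope, Pi.pow_apply, Pi.mul_apply]
  field_simp
  ring

lemma tendsto_riccatiWeight_atTop (hk : 0 < k) : Tendsto (riccatiWeight k) atTop (𝓝 0) := by
  have hσ : Tendsto (fun x => sigmoid (k * x)) atTop (𝓝 1) :=
    tendsto_sigmoid_atTop.comp (tendsto_id.const_mul_atTop hk)
  have hφ : ContinuousAt (fun s : ℝ => k * (k * s * (1 - s)) ^ 2 * (1 + (2 * s - 1) ^ 2) /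
      (2 * (2 * s - 1))) 1 := by
    fun_prop (disch := norm_num)
  have h := hφ.tendsto.comp hσ
  norm_num at h
  exact h

lemma tendsto_sq_mul_riccatiWeight_atTop (hk : 0 < k) {g : ℝ → ℝ}
    (hgb : ∃ M, ∀ x, |g x| ≤ M) :
    Tendsto (fun x => g x ^ 2 * riccatiWeight k x) atTop (𝓝 0) := by
  obtain ⟨M, hM⟩ := hgb
  refine isBoundedUnder_le_mul_tendsto_zero (isBoundedUnder_of ⟨M ^ 2, fun x => ?_⟩)
    (tendsto_riccatiWeight_atTop hk)
  simpa only [Function.comp, norm_pow, Real.norm_eq_abs] using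
    pow_le_pow_left₀ (abs_nonneg _) (hM x) 2

lemma tendsto_sq_mul_riccatiWeight_nhdsNE (hk : 0 < k) {g : ℝ → ℝ} {g' : ℝ}
    (hg : HasDerivAt g g' 0) (hg0 : g 0 = 0) :
    Tendsto (fun x => g x ^ 2 * riccatiWeight k x) (𝓝[≠] 0) (𝓝 0) := by
  set t : ℝ → ℝ := fun x => 2 * sigmoid (k * x) - 1
  have ht : HasDerivAt t (2 * sigmoidSlope k 0) 0 :=
    ((hasDerivAt_sigmoid_const_mul k 0).const_mul 2).sub_const 1
  have hpole := tendsto_sq_div_nhdsNE_of_hasDerivAt ht hg (by simp [t, sigmoid_zero]) hg0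
    (by linarith [sigmoidSlope_pos hk 0])
  have hreg : Continuous fun x => k * sigmoidSlope k x ^ 2 * (1 + t x ^ 2) / 2 := by
    have := continuous_sigmoidSlope k
    fun_prop
  have hlim := hpole.mul ((hreg.tendsto 0).mono_left nhdsWithin_le_nhds)
  rw [zero_mul] at hlim
  refine hlim.congr fun x => ?_
  simp only [riccatiWeight, t]
  generalize 2 * sigmoid (k * x) - 1 = s
  ring

end riccatiWeight

theorem setIntegral_Ioi_sq_mul_deriv_sigmoidSlope_sq_le {k : ℝ} (hk : 0 < k) {g : ℝ → ℝ}
    (hg : Differentiable ℝ g) (hg0 : g 0 = 0) (hgb : ∃ M, ∀ x, |g x| ≤ M)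
    (hg'b : ∃ M, ∀ x, |deriv g x| ≤ M) :
    ∫ x in Ioi 0, g x ^ 2 * deriv (sigmoidSlope k) x ^ 2
      ≤ ∫ x in Ioi 0, deriv g x ^ 2 * sigmoidSlope k x ^ 2 := by
  have hint₁ := integrable_sq_mul_deriv_sigmoidSlope_sq hk hg.continuous.aestronglyMeasurable hgb
  have hint₂ := integrable_sq_mul_sigmoidSlope_sq hk (measurable_deriv g).aestronglyMeasurable hg'b
  rw [← sub_nonneg, ← integral_sub hint₂.integrableOn hint₁.integrableOn]
  have hcont : ContinuousWithinAt (fun x => g x ^ 2 * riccatiWeight k x) (Ici 0) 0 := by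
    rw [← continuousWithinAt_Ioi_iff_Ici, ContinuousWithinAt, hg0, zero_pow two_ne_zero, zero_mul]
    exact (tendsto_sq_mul_riccatiWeight_nhdsNE hk (hg 0).hasDerivAt hg0).mono_left
      (nhdsWithin_mono _ fun x (hx : 0 < x) => hx.ne')
  have hderiv (x : ℝ) (hx : x ∈ Ioi 0) : HasDerivAt (fun x => g x ^ 2 * riccatiWeight k x)
      (2 * g x * deriv g x * riccatiWeight k x + g x ^ 2 *
        -(deriv (sigmoidSlope k) x ^ 2 + (riccatiWeight k x / sigmoidSlope k x) ^ 2)) x :=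
    (((hg x).hasDerivAt.pow 2).mul (hasDerivAt_riccatiWeight hk.ne'
      (two_mul_sigmoid_sub_one_pos hk hx).ne')).congr_deriv (by simp only [Pi.pow_apply]; ring)
  simpa [hg0] using sub_le_integral_Ioi_of_hasDerivAt_of_le hcont hderiv
    (fun x _ => two_mul_mul_mul_add_sq_mul_le_of_riccati (sigmoidSlope_pos hk x).ne' rfl)
    (hint₂.sub hint₁).integrableOn (tendsto_sq_mul_riccatiWeight_atTop hk hgb)

theorem integral_sub_sq_mul_deriv_sigmoidSlope_sq_le {k : ℝ} (hk : 0 < k) {h : ℝ → ℝ}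
    (hh : Differentiable ℝ h) (hb : ∃ M, ∀ x, |h x| ≤ M) (hb' : ∃ M, ∀ x, |deriv h x| ≤ M) :
    ∫ x, (h x - h 0) ^ 2 * deriv (sigmoidSlope k) x ^ 2
      ≤ ∫ x, deriv h x ^ 2 * sigmoidSlope k x ^ 2 := by
  have hsplit (F : ℝ → ℝ) (hF : Integrable F) :
      ∫ x, F x = (∫ x in Ioi 0, F (-x)) + ∫ x in Ioi 0, F x := by
    rw [← intervalIntegral.integral_Iic_add_Ioi hF.integrableOn hF.integrableOn,
      integral_comp_neg_Ioi, neg_zero]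
  set g : ℝ → ℝ := fun x => h x - h 0
  have hg : Differentiable ℝ g := hh.sub_const _
  have hg' : deriv g = deriv h := deriv_sub_const_fun _
  have hgb : ∃ M, ∀ x, |g x| ≤ M := by
    obtain ⟨M, hM⟩ := hb
    exact ⟨2 * M, fun x => (abs_sub _ _).trans (by linarith [hM x, hM 0])⟩
  have hright := setIntegral_Ioi_sq_mul_deriv_sigmoidSlope_sq_le hk hg (sub_self _) hgb
    (hg' ▸ hb')
  have hleft := setIntegral_Ioi_sq_mul_deriv_sigmoidSlope_sq_le hk (g := fun x => g (-x))
    (hg.comp differentiable_neg) (by simp [g]) (hgb.imp fun M hM x => hM (-x))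
    (by simpa only [deriv_comp_neg, abs_neg, hg'] using hb'.imp fun M hM x => hM (-x))
  have hint₁ := integrable_sq_mul_deriv_sigmoidSlope_sq hk hg.continuous.aestronglyMeasurable hgb
  have hint₂ := integrable_sq_mul_sigmoidSlope_sq hk (measurable_deriv h).aestronglyMeasurable hb'
  rw [hsplit _ hint₁, hsplit _ hint₂]
  rw [hg'] at hright
  simp only [deriv_comp_neg, hg', neg_sq] at hleft
  simp only [deriv_sigmoidSlope_neg, sigmoidSlope_neg, neg_sq]
  exact add_le_add hleft hright

theorem whole_line_hardy_general
    (ν b : ℝ) (hν : 0 < ν) (hb : 0 < b)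
    (h : ℝ → ℝ) (hh : ContDiff ℝ 1 h)
    (hbdd : ∃ M : ℝ, ∀ x : ℝ, |h x| ≤ M)
    (hbdd' : ∃ M : ℝ, ∀ x : ℝ, |deriv h x| ≤ M) :
    ∫ x : ℝ, (h x - h 0) ^ 2 * (deriv (twW ν b) x) ^ 2
    ≤ ∫ x : ℝ, (deriv h x) ^ 2 * (twW ν b x) ^ 2 := by
  have hk : 0 < waveK ν b := Real.sqrt_pos.2 (by positivity)
  have hw : twW ν b = sigmoidSlope (waveK ν b) := by
    funext x
    simp only [twW, twProfile, sigmoidSlope, sigmoid_def, neg_mul]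
  rw [hw]
  exact integral_sub_sq_mul_deriv_sigmoidSlope_sq_le hk (hh.differentiable one_ne_zero)
    hbdd hbdd'

/-- whole-line Hardy-type inequality: for `h ∈ C¹(ℝ)` with `h`
and `h'` bounded, `∫_ℝ (h - h(0))² (w')² ≤ ∫_ℝ (h')² w²`. -/
theorem whole_line_hardy
    (ν b a : ℝ) (hν : 0 < ν) (hb : 0 < b) (ha : a ∈ Set.Ioo (0 : ℝ) 1)
    (h : ℝ → ℝ) (hh : ContDiff ℝ 1 h)
    (hbdd : ∃ M : ℝ, ∀ x : ℝ, |h x| ≤ M)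
    (hbdd' : ∃ M : ℝ, ∀ x : ℝ, |deriv h x| ≤ M) :
    ∫ x : ℝ, (h x - h 0) ^ 2 * (deriv (twW ν b) x) ^ 2
    ≤ ∫ x : ℝ, (deriv h x) ^ 2 * (twW ν b x) ^ 2 :=
  whole_line_hardy_general ν b hν hb h hh hbdd hbdd'
end

section
/- (Remainder estimate) Fix y ∈ ℝ and let ṽ(x) = v(x + y) be the shifted travelling wave. For u ∈ H¹(ℝ) define the Taylor remainder R(u) = f(u + ṽ) - f(ṽ) - f'(ṽ)·u = (1/2) f''(ṽ) u² + (1/6) f'''(ṽ) u³. Then ∫_ℝ R(u)(x)·u(x) dx ≤ (4 + a)·‖u‖_H²·‖u‖_V. -/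
open Real MeasureTheory

/-- The cubic nonlinearity of the Nagumo equation. -/
noncomputable def nagF (a : ℝ) (v : ℝ) : ℝ := v * (1 - v) * (v - a)

/-!
Since `f` is cubic, `R(u) u = (1 + a - 3ṽ) u³ - u⁴` exactly. As `0 < ṽ < 1` and `0 < a < 1`,
the coefficient has modulus at most `2`, and the one-dimensional Sobolev embedding
`‖u‖_∞ ≤ ‖u‖_V` (from `u(x)² = ∫_{-∞}^x 2 u u'`) gives `R(u) u ≤ 2 ‖u‖_V u²` pointwise.
Integrating yields the bound with constant `2 ≤ 4 + a`.
-/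

lemma hasDerivAt_nagF (a v : ℝ) :
    HasDerivAt (nagF a) (-3 * v ^ 2 + 2 * (1 + a) * v - a) v :=
  (((hasDerivAt_id' v).fun_mul ((hasDerivAt_id' v).const_sub 1)).fun_mul
    ((hasDerivAt_id' v).sub_const a)).congr_deriv (by ring)

lemma nagF_taylor_remainder_mul (a v u : ℝ) :
    (nagF a (u + v) - nagF a v - deriv (nagF a) v * u) * u
      = (1 + a - 3 * v) * u ^ 3 - u ^ 4 := by
  rw [(hasDerivAt_nagF a v).deriv, nagF, nagF]
  ring

lemma nagF_taylor_remainder_mul_le {a v u M : ℝ} (ha : a ∈ Set.Icc (0 : ℝ) 1)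
    (hv : v ∈ Set.Icc (0 : ℝ) 1) (hu : |u| ≤ M) :
    (nagF a (u + v) - nagF a v - deriv (nagF a) v * u) * u ≤ 2 * M * u ^ 2 := by
  obtain ⟨ha0, ha1⟩ := ha
  obtain ⟨hv0, hv1⟩ := hv
  have hc : |1 + a - 3 * v| ≤ 2 := abs_le.2 ⟨by linarith, by linarith⟩
  have hcu : (1 + a - 3 * v) * u ≤ 2 * M :=
    calc (1 + a - 3 * v) * u ≤ |1 + a - 3 * v| * |u| := by
          rw [← abs_mul]; exact le_abs_self _
      _ ≤ 2 * M := mul_le_mul hc hu (abs_nonneg _) zero_le_two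
  rw [nagF_taylor_remainder_mul]
  nlinarith [mul_le_mul_of_nonneg_right hcu (sq_nonneg u), pow_two_nonneg (u ^ 2)]

lemma twProfile_mem_Ioo (ν b x : ℝ) : twProfile ν b x ∈ Set.Ioo (0 : ℝ) 1 := by
  have he := Real.exp_pos (-(waveK ν b) * x)
  exact ⟨by unfold twProfile; positivity, inv_lt_one_of_one_lt₀ (by linarith)⟩

/-- No integrability of `f` is needed: a non-integrable `f` has integral `0`. -/
lemma integral_le_integral_of_nonneg_right {α : Type*} [MeasurableSpace α] {μ : Measure α}
    {f g : α → ℝ} (hg : Integrable g μ) (hg0 : 0 ≤ᵐ[μ] g) (hfg : f ≤ᵐ[μ] g) :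
    ∫ x, f x ∂μ ≤ ∫ x, g x ∂μ := by
  by_cases hf : Integrable f μ
  · exact integral_mono_ae hf hg hfg
  · rw [integral_undef hf]
    exact integral_nonneg_of_ae hg0

lemma sq_le_integral_deriv_sq_add_integral_sq {u : ℝ → ℝ} (hu : Differentiable ℝ u)
    (huH : MemLp u 2 volume) (huV : MemLp (deriv u) 2 volume) (x : ℝ) :
    u x ^ 2 ≤ (∫ t, deriv u t ^ 2) + ∫ t, u t ^ 2 := by
  have hu2 : Integrable (fun t => u t ^ 2) := huH.integrable_sq
  have hu'2 : Integrable (fun t => deriv u t ^ 2) := huV.integrable_sq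
  have hderiv : ∀ t, HasDerivAt (fun s => u s ^ 2) (2 * u t * deriv u t) t := fun t => by
    simpa using (hu t).hasDerivAt.fun_pow 2
  have hbound : ∀ t, |2 * u t * deriv u t| ≤ deriv u t ^ 2 + u t ^ 2 := fun t => by
    rw [abs_le]
    constructor <;> nlinarith [sq_nonneg (u t + deriv u t), sq_nonneg (u t - deriv u t)]
  have hint : Integrable (fun t => 2 * u t * deriv u t) :=
    (hu'2.add hu2).mono' ((hu.continuous.aestronglyMeasurable.const_mul 2).mul huV.1)
      (ae_of_all _ hbound)
  have hlim : Filter.Tendsto (fun t => u t ^ 2) Filter.atBot (nhds 0) :=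
    tendsto_zero_of_hasDerivAt_of_integrableOn_Iic (a := x) (fun t _ => hderiv t)
      hint.integrableOn hu2.integrableOn
  have hFTC : ∫ t in Set.Iic x, 2 * u t * deriv u t = u x ^ 2 - 0 :=
    integral_Iic_of_hasDerivAt_of_tendsto (hderiv x).continuousAt.continuousWithinAt
      (fun t _ => hderiv t) hint.integrableOn hlim
  calc u x ^ 2 = ∫ t in Set.Iic x, 2 * u t * deriv u t := by rw [hFTC, sub_zero]
    _ ≤ ∫ t in Set.Iic x, (deriv u t ^ 2 + u t ^ 2) :=
      setIntegral_mono hint.integrableOn (hu'2.add hu2).integrableOn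
        fun t => (le_abs_self _).trans (hbound t)
    _ ≤ ∫ t, (deriv u t ^ 2 + u t ^ 2) :=
      setIntegral_le_integral (hu'2.add hu2) (ae_of_all _ fun t => by positivity)
    _ = (∫ t, deriv u t ^ 2) + ∫ t, u t ^ 2 := integral_add hu'2 hu2

theorem remainder_estimate_general
    (ν b a : ℝ) (ha : a ∈ Set.Ioo (0 : ℝ) 1)
    (y : ℝ)
    (u : ℝ → ℝ) (hu : Differentiable ℝ u)
    (huH : MemLp u 2 (volume : Measure ℝ))
    (huV : MemLp (deriv u) 2 (volume : Measure ℝ))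
    (R : ℝ → ℝ)
    (hR : R = fun x =>
      nagF a (u x + twProfile ν b (x + y)) - nagF a (twProfile ν b (x + y))
        - deriv (nagF a) (twProfile ν b (x + y)) * u x) :
    ∫ x : ℝ, R x * u x
    ≤ (4 + a) * (∫ x : ℝ, (u x) ^ 2)
        * Real.sqrt ((∫ x : ℝ, (deriv u x) ^ 2) + ∫ x : ℝ, (u x) ^ 2) := by
  set M := Real.sqrt ((∫ x : ℝ, (deriv u x) ^ 2) + ∫ x : ℝ, (u x) ^ 2)
  have hM : 0 ≤ M := Real.sqrt_nonneg _
  have hsup : ∀ x, |u x| ≤ M := fun x =>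
    Real.abs_le_sqrt (sq_le_integral_deriv_sq_add_integral_sq hu huH huV x)
  have hpointwise : ∀ x, R x * u x ≤ 2 * M * u x ^ 2 := fun x => by
    rw [hR]
    exact nagF_taylor_remainder_mul_le (Set.Ioo_subset_Icc_self ha)
      (Set.Ioo_subset_Icc_self (twProfile_mem_Ioo ν b (x + y))) (hsup x)
  have hB : 0 ≤ ∫ x : ℝ, u x ^ 2 := integral_nonneg fun x => sq_nonneg _
  calc ∫ x, R x * u x ≤ ∫ x, 2 * M * u x ^ 2 :=
        integral_le_integral_of_nonneg_right (huH.integrable_sq.const_mul _)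
          (ae_of_all _ fun x => by positivity) (ae_of_all _ hpointwise)
    _ = 2 * M * ∫ x, u x ^ 2 := integral_const_mul _ _
    _ ≤ (4 + a) * (∫ x, u x ^ 2) * M := by nlinarith [mul_nonneg hB hM, ha.1]

/-- remainder estimate: for the shifted wave `ṽ = v(· + y)` and
`u ∈ H¹(ℝ)`, the Taylor remainder `R(u) = f(u+ṽ) - f(ṽ) - f'(ṽ)u` satisfies
`⟨R(u), u⟩ ≤ (4+a) ‖u‖_H² ‖u‖_V`. -/
theorem remainder_estimate
    (ν b a : ℝ) (hν : 0 < ν) (hb : 0 < b) (ha : a ∈ Set.Ioo (0 : ℝ) 1)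
    (y : ℝ)
    (u : ℝ → ℝ) (hu : Differentiable ℝ u)
    (huH : MemLp u 2 (volume : Measure ℝ))
    (huV : MemLp (deriv u) 2 (volume : Measure ℝ))
    (R : ℝ → ℝ)
    (hR : R = fun x =>
      nagF a (u x + twProfile ν b (x + y)) - nagF a (twProfile ν b (x + y))
        - deriv (nagF a) (twProfile ν b (x + y)) * u x) :
    ∫ x : ℝ, R x * u x
    ≤ (4 + a) * (∫ x : ℝ, (u x) ^ 2)
        * Real.sqrt ((∫ x : ℝ, (deriv u x) ^ 2) + ∫ x : ℝ, (u x) ^ 2) :=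
  remainder_estimate_general ν b a ha y u hu huH huV R hR
end

section
/- (Proposition 2.4, Lipschitz continuity of the phase functional) Let T > 0 and let u : [0,T] → L²(ℝ) be any map with M := sup_{t ∈ [0,T]} ‖u(t)‖_H < ∞. For t ∈ [0,T] and C ∈ ℝ define B(t,C) = ∫_ℝ v'(x + C + ct)·( v(x + C + ct) - v(x + ct) - u(t)(x) ) dx. Then there exists a finite constant L, depending only on ν, b and M, such that |B(t,C₁) - B(t,C₂)| ≤ L·|C₁ - C₂| for all t ∈ [0,T] and all C₁, C₂ ∈ ℝ. -/
open Real MeasureTheory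

/-- The wave speed `c = sqrt(2νb)·(1/2 - a)`. -/
noncomputable def waveSpeed (ν b a : ℝ) : ℝ := Real.sqrt (2 * ν * b) * (1 / 2 - a)

/-!
Write `v = σ(k ·)` with `σ` the logistic function; then `|v'| ≤ k e^{-k|y|}` and
`|v''| ≤ k² e^{-k|y|}`. By translation invariance `∫ v'(x+C+ct) v(x+C+ct) dx` does not depend on
`C`, so up to a constant `B(t, ·)` is `C ↦ -∫ v'(x+C+ct) g(x) dx` with `g = v(· + ct) + u(t)`,
`|g| ≤ 1 + |u(t)|`. Differentiating under the integral sign (dominated on `|C - C₀| < 1` since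
`e^{-k|y+θ|} ≤ e^k e^{-k|y|}`) and using `2ab ≤ a² + b²`, the derivative in `C` is bounded by
`k² (‖e^{-k|·|}‖₁ + (‖e^{-k|·|}‖₂² + M²) / 2)`, and the mean value inequality concludes.
-/

open Set Metric Filter

theorem integrable_exp_neg_mul_abs {k : ℝ} (hk : 0 < k) :
    Integrable fun y : ℝ => exp (-(k * |y|)) := by
  have hIoi : IntegrableOn (fun y : ℝ => exp (-(k * |y|))) (Ioi 0) :=
    (exp_neg_integrableOn_Ioi 0 hk).congr_fun
      (fun y hy => by simp [abs_of_pos (mem_Ioi.mp hy), neg_mul]) measurableSet_Ioi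
  have hIio : IntegrableOn (fun y : ℝ => exp (-(k * |y|))) (Iio 0) := by
    simpa using hIoi.comp_neg
  simpa using hIio.union ((integrableOn_Ici_iff_integrableOn_Ioi (by finiteness)).mpr hIoi)

theorem exp_neg_mul_abs_add_le {k : ℝ} (hk : 0 ≤ k) {θ : ℝ} (hθ : |θ| ≤ 1) (y : ℝ) :
    exp (-(k * |y + θ|)) ≤ exp k * exp (-(k * |y|)) := by
  rw [← exp_add, exp_le_exp]
  have := abs_add_le (y + θ) (-θ)
  rw [add_neg_cancel_right, abs_neg] at this
  nlinarith

theorem exp_neg_mul_abs_sq (k y : ℝ) : exp (-(k * |y|)) ^ 2 = exp (-(2 * k * |y|)) := by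
  rw [← exp_nat_mul]; ring_nf

section WeightedPairing

variable {k : ℝ} {w : ℝ → ℝ}

theorem integrable_exp_neg_mul_abs_add_sq (hk : 0 < k) (a : ℝ) :
    Integrable fun x : ℝ => exp (-(k * |x + a|)) ^ 2 := by
  simp_rw [exp_neg_mul_abs_sq]
  exact (integrable_exp_neg_mul_abs (by positivity)).comp_add_right a

theorem exp_neg_mul_abs_add_mul_le_add (a c : ℝ) (x : ℝ) :
    exp (-(k * |x + a|)) * (c + |w x|)
      ≤ c * exp (-(k * |x + a|)) + (exp (-(k * |x + a|)) ^ 2 + w x ^ 2) / 2 := by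
  nlinarith [sq_nonneg (exp (-(k * |x + a|)) - |w x|), sq_abs (w x)]

theorem integrable_exp_neg_mul_abs_add_mul (hk : 0 < k) (hw : MemLp w 2) (a : ℝ) {c : ℝ}
    (hc : 0 ≤ c) :
    Integrable fun x : ℝ => exp (-(k * |x + a|)) * (c + |w x|) := by
  refine Integrable.mono' (((integrable_exp_neg_mul_abs hk).comp_add_right a).const_mul c |>.add
    (((integrable_exp_neg_mul_abs_add_sq hk a).add hw.integrable_sq).div_const 2))
    ((by fun_prop : Continuous fun x : ℝ => exp (-(k * |x + a|))).aestronglyMeasurable.mul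
      (hw.aestronglyMeasurable.norm.const_add c)) (.of_forall fun x => ?_)
  rw [norm_of_nonneg (by positivity)]
  exact exp_neg_mul_abs_add_mul_le_add a c x

theorem integral_exp_neg_mul_abs_add_mul_le (hk : 0 < k) (hw : MemLp w 2) (a : ℝ) {c : ℝ}
    (hc : 0 ≤ c) :
    ∫ x, exp (-(k * |x + a|)) * (c + |w x|)
      ≤ c * (∫ y, exp (-(k * |y|))) + ((∫ y, exp (-(k * |y|)) ^ 2) + ∫ x, w x ^ 2) / 2 := by
  have hE := (integrable_exp_neg_mul_abs hk).comp_add_right a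
  have hE2 := integrable_exp_neg_mul_abs_add_sq hk a
  have hw2 := hw.integrable_sq
  have hsq : Integrable fun x => exp (-(k * |x + a|)) ^ 2 + w x ^ 2 := hE2.add hw2
  have hbound : Integrable fun x =>
      c * exp (-(k * |x + a|)) + (exp (-(k * |x + a|)) ^ 2 + w x ^ 2) / 2 :=
    (hE.const_mul c).add (hsq.div_const 2)
  have hshift : ∫ x, exp (-(k * |x + a|)) = ∫ y, exp (-(k * |y|)) :=
    integral_add_right_eq_self (fun y => exp (-(k * |y|))) a
  have hshift2 : ∫ x, exp (-(k * |x + a|)) ^ 2 = ∫ y, exp (-(k * |y|)) ^ 2 :=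
    integral_add_right_eq_self (fun y => exp (-(k * |y|)) ^ 2) a
  calc ∫ x, exp (-(k * |x + a|)) * (c + |w x|)
      ≤ ∫ x, (c * exp (-(k * |x + a|)) + (exp (-(k * |x + a|)) ^ 2 + w x ^ 2) / 2) :=
        integral_mono (integrable_exp_neg_mul_abs_add_mul hk hw a hc) hbound
          (exp_neg_mul_abs_add_mul_le_add a c)
    _ = _ := by
        rw [integral_add (hE.const_mul c) (hsq.div_const 2), integral_const_mul,
          integral_div, integral_add hE2 hw2, hshift, hshift2]

end WeightedPairing

section TranslatedPairing

variable {φ φ' g w : ℝ → ℝ} {k A c : ℝ}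

theorem abs_comp_add_mul_le (hφ_le : ∀ y, |φ y| ≤ A * exp (-(k * |y|)))
    (hg : ∀ x, |g x| ≤ c + |w x|) (C x : ℝ) :
    |φ (x + C) * g x| ≤ A * (exp (-(k * |x + C|)) * (c + |w x|)) := by
  rw [abs_mul, ← mul_assoc]
  exact mul_le_mul (hφ_le _) (hg x) (abs_nonneg _) ((abs_nonneg _).trans (hφ_le _))

theorem integrable_comp_add_mul (hk : 0 < k) (hc : 0 ≤ c) (hφc : Continuous φ)
    (hφ_le : ∀ y, |φ y| ≤ A * exp (-(k * |y|))) (hgm : AEStronglyMeasurable g)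
    (hg : ∀ x, |g x| ≤ c + |w x|) (hw : MemLp w 2) (C : ℝ) :
    Integrable fun x => φ (x + C) * g x :=
  ((integrable_exp_neg_mul_abs_add_mul hk hw C hc).const_mul A).mono'
    ((hφc.comp (continuous_add_const C)).aestronglyMeasurable.mul hgm)
    (.of_forall (abs_comp_add_mul_le hφ_le hg C))

theorem abs_integral_comp_add_mul_le (hk : 0 < k) (hc : 0 ≤ c)
    (hφ_le : ∀ y, |φ y| ≤ A * exp (-(k * |y|))) (hg : ∀ x, |g x| ≤ c + |w x|)
    (hw : MemLp w 2) (C : ℝ) :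
    |∫ x, φ (x + C) * g x|
      ≤ A * (c * (∫ y, exp (-(k * |y|)))
        + ((∫ y, exp (-(k * |y|)) ^ 2) + ∫ x, w x ^ 2) / 2) := by
  have hA : 0 ≤ A := by simpa using (abs_nonneg _).trans (hφ_le 0)
  rw [← norm_eq_abs]
  calc ‖∫ x, φ (x + C) * g x‖
      ≤ ∫ x, A * (exp (-(k * |x + C|)) * (c + |w x|)) :=
        norm_integral_le_of_norm_le ((integrable_exp_neg_mul_abs_add_mul hk hw C hc).const_mul A)
          (.of_forall (abs_comp_add_mul_le hφ_le hg C))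
    _ ≤ _ := by
        rw [integral_const_mul]
        exact mul_le_mul_of_nonneg_left (integral_exp_neg_mul_abs_add_mul_le hk hw C hc) hA

theorem hasDerivAt_integral_comp_add_mul (hk : 0 < k) (hc : 0 ≤ c)
    (hφ_deriv : ∀ y, HasDerivAt φ (φ' y) y) (hφ_le : ∀ y, |φ y| ≤ A * exp (-(k * |y|)))
    (hφ'_le : ∀ y, |φ' y| ≤ A' * exp (-(k * |y|))) (hgm : AEStronglyMeasurable g)
    (hg : ∀ x, |g x| ≤ c + |w x|) (hw : MemLp w 2) (C₀ : ℝ) :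
    HasDerivAt (fun C => ∫ x, φ (x + C) * g x) (∫ x, φ' (x + C₀) * g x) C₀ := by
  have hφc : Continuous φ := continuous_iff_continuousAt.2 fun y => (hφ_deriv y).continuousAt
  have hφ'm : Measurable φ' := funext (fun y => (hφ_deriv y).deriv) ▸ measurable_deriv φ
  refine (hasDerivAt_integral_of_dominated_loc_of_deriv_le (ball_mem_nhds C₀ one_pos)
    (.of_forall fun C => (hφc.comp (continuous_add_const C)).aestronglyMeasurable.mul hgm)
    (integrable_comp_add_mul hk hc hφc hφ_le hgm hg hw C₀)
    ((hφ'm.comp (measurable_add_const C₀)).aestronglyMeasurable.mul hgm)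
    (bound := fun x => A' * exp k * (exp (-(k * |x + C₀|)) * (c + |w x|))) ?_
    ((integrable_exp_neg_mul_abs_add_mul hk hw C₀ hc).const_mul _)
    (.of_forall fun x C _ => ((hφ_deriv (x + C)).comp_const_add x C).mul_const (g x))).2
  refine .of_forall fun x C hC => (abs_comp_add_mul_le hφ'_le hg C x).trans ?_
  have hθ : |C - C₀| ≤ 1 := (mem_ball_iff_norm.1 hC).le
  have hshift := exp_neg_mul_abs_add_le hk.le hθ (x + C₀)
  rw [add_add_sub_cancel] at hshift
  have hA' : 0 ≤ A' := by simpa using (abs_nonneg _).trans (hφ'_le 0)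
  rw [mul_assoc A', ← mul_assoc (exp k)]
  gcongr

theorem abs_integral_comp_add_mul_sub_le (hk : 0 < k) (hc : 0 ≤ c)
    (hφ_deriv : ∀ y, HasDerivAt φ (φ' y) y) (hφ_le : ∀ y, |φ y| ≤ A * exp (-(k * |y|)))
    (hφ'_le : ∀ y, |φ' y| ≤ A' * exp (-(k * |y|))) (hgm : AEStronglyMeasurable g)
    (hg : ∀ x, |g x| ≤ c + |w x|) (hw : MemLp w 2) (C₁ C₂ : ℝ) :
    |(∫ x, φ (x + C₁) * g x) - ∫ x, φ (x + C₂) * g x|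
      ≤ A' * (c * (∫ y, exp (-(k * |y|)))
        + ((∫ y, exp (-(k * |y|)) ^ 2) + ∫ x, w x ^ 2) / 2) * |C₁ - C₂| := by
  simpa only [norm_eq_abs] using convex_univ.norm_image_sub_le_of_norm_hasDerivWithin_le
    (fun C _ => (hasDerivAt_integral_comp_add_mul hk hc hφ_deriv hφ_le hφ'_le hgm hg hw C)
      |>.hasDerivWithinAt)
    (fun C _ => abs_integral_comp_add_mul_le hk hc hφ'_le hg hw C) (mem_univ C₂) (mem_univ C₁)

theorem integral_comp_add_mul_sub_eq {v : ℝ → ℝ} {C : ℝ}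
    (hφv : Integrable fun y => φ y * v y) (hφg : Integrable fun x => φ (x + C) * g x) :
    ∫ x, φ (x + C) * (v (x + C) - g x) = (∫ y, φ y * v y) - ∫ x, φ (x + C) * g x := by
  simp_rw [mul_sub]
  rw [integral_sub (hφv.comp_add_right C) hφg, integral_add_right_eq_self (fun y => φ y * v y)]

end TranslatedPairing

theorem sigmoid_mul_sigmoid_neg_le_exp_neg (x : ℝ) : sigmoid x * sigmoid (-x) ≤ exp (-x) := by
  rw [← sigmoid_mul_rexp_neg, ← mul_assoc]
  exact mul_le_of_le_one_left (exp_pos _).le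
    (mul_le_one₀ (sigmoid_le_one x) (sigmoid_nonneg x) (sigmoid_le_one x))

theorem abs_sigmoid_mul_one_sub_sigmoid_le (x : ℝ) :
    |sigmoid x * (1 - sigmoid x)| ≤ exp (-|x|) := by
  rw [← sigmoid_neg, abs_of_nonneg (mul_nonneg (sigmoid_nonneg _) (sigmoid_nonneg _))]
  rcases abs_choice x with hx | hx <;> rw [hx]
  · exact sigmoid_mul_sigmoid_neg_le_exp_neg x
  · simpa [mul_comm] using sigmoid_mul_sigmoid_neg_le_exp_neg (-x)

theorem hasDerivAt_sigmoid_mul_one_sub_sigmoid (x : ℝ) :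
    HasDerivAt (fun x => sigmoid x * (1 - sigmoid x))
      (sigmoid x * (1 - sigmoid x) * (1 - 2 * sigmoid x)) x :=
  ((hasDerivAt_sigmoid x).mul ((hasDerivAt_sigmoid x).const_sub 1)).congr_deriv (by ring)

theorem abs_sigmoid_mul_one_sub_sigmoid_mul_le (x : ℝ) :
    |sigmoid x * (1 - sigmoid x) * (1 - 2 * sigmoid x)| ≤ exp (-|x|) := by
  have h₁ : |1 - 2 * sigmoid x| ≤ 1 := by
    rw [abs_le]; constructor <;> linarith [sigmoid_nonneg x, sigmoid_le_one x]
  rw [abs_mul]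
  exact (mul_le_of_le_one_right (abs_nonneg _) h₁).trans (abs_sigmoid_mul_one_sub_sigmoid_le x)

theorem HasDerivAt.comp_const_mul {f : ℝ → ℝ} {f' : ℝ} (k y : ℝ)
    (hf : HasDerivAt f f' (k * y)) :
    HasDerivAt (fun y => f (k * y)) (k * f') y :=
  (hf.comp y ((hasDerivAt_id y).const_mul k)).congr_deriv (by ring)

theorem abs_mul_comp_mul_le {f : ℝ → ℝ} (hf : ∀ x, |f x| ≤ exp (-|x|)) {k : ℝ}
    (hk : 0 ≤ k) (a y : ℝ) : |a * f (k * y)| ≤ |a| * exp (-(k * |y|)) := by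
  have := hf (k * y)
  rw [abs_mul, abs_of_nonneg hk] at this
  rw [abs_mul]
  exact mul_le_mul_of_nonneg_left this (abs_nonneg a)

theorem abs_integral_sigmoid_pairing_sub_le {k : ℝ} (hk : 0 < k) {w : ℝ → ℝ}
    (hw : MemLp w 2) (s C₁ C₂ : ℝ) :
    |(∫ x, deriv (fun y => sigmoid (k * y)) (x + C₁ + s)
          * (sigmoid (k * (x + C₁ + s)) - sigmoid (k * (x + s)) - w x))
        - ∫ x, deriv (fun y => sigmoid (k * y)) (x + C₂ + s)
          * (sigmoid (k * (x + C₂ + s)) - sigmoid (k * (x + s)) - w x)|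
      ≤ k ^ 2 * ((∫ y, exp (-(k * |y|))) + ((∫ y, exp (-(k * |y|)) ^ 2) + ∫ x, w x ^ 2) / 2)
        * |C₁ - C₂| := by
  set v : ℝ → ℝ := fun y => sigmoid (k * y)
  set φ : ℝ → ℝ := fun y => k * (sigmoid (k * y) * (1 - sigmoid (k * y)))
  set φ' : ℝ → ℝ := fun y =>
    k ^ 2 * (sigmoid (k * y) * (1 - sigmoid (k * y)) * (1 - 2 * sigmoid (k * y)))
  set g : ℝ → ℝ := fun x => v (x + s) + w x
  have hv_deriv : ∀ y, HasDerivAt v (φ y) y := fun y => (hasDerivAt_sigmoid _).comp_const_mul k y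
  have hφ_deriv : ∀ y, HasDerivAt φ (φ' y) y := fun y =>
    (((hasDerivAt_sigmoid_mul_one_sub_sigmoid _).comp_const_mul k y).const_mul k).congr_deriv
      (by ring)
  have hφ_le : ∀ y, |φ y| ≤ |k| * exp (-(k * |y|)) :=
    abs_mul_comp_mul_le abs_sigmoid_mul_one_sub_sigmoid_le hk.le k
  have hφ'_le : ∀ y, |φ' y| ≤ |k ^ 2| * exp (-(k * |y|)) :=
    abs_mul_comp_mul_le abs_sigmoid_mul_one_sub_sigmoid_mul_le hk.le (k ^ 2)
  have hφc : Continuous φ := continuous_iff_continuousAt.2 fun y => (hφ_deriv y).continuousAt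
  have hgm : AEStronglyMeasurable g :=
    (continuous_sigmoid.comp (by fun_prop)).aestronglyMeasurable.add hw.1
  have hv_le : ∀ y, |v y| ≤ 1 := fun y =>
    abs_le.2 ⟨by linarith [sigmoid_nonneg (k * y)], sigmoid_le_one _⟩
  have hg : ∀ x, |g x| ≤ 1 + |w x| := fun x => (abs_add_le _ _).trans (by gcongr; exact hv_le _)
  have hφv : Integrable fun y => φ y * v y :=
    (((integrable_exp_neg_mul_abs hk).const_mul |k|).mono' hφc.aestronglyMeasurable
      (.of_forall hφ_le)).mul_bdd (continuous_sigmoid.comp (by fun_prop)).aestronglyMeasurable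
      (.of_forall hv_le)
  have hB : ∀ C, ∫ x, deriv v (x + C + s) * (v (x + C + s) - v (x + s) - w x)
      = (∫ y, φ y * v y) - ∫ x, φ (x + (C + s)) * g x := fun C => by
    simp_rw [funext fun y => (hv_deriv y).deriv, add_assoc, sub_sub]
    exact integral_comp_add_mul_sub_eq hφv
      (integrable_comp_add_mul hk zero_le_one hφc hφ_le hgm hg hw (C + s))
  rw [hB, hB, sub_sub_sub_cancel_left, abs_sub_comm]
  have := abs_integral_comp_add_mul_sub_le hk zero_le_one hφ_deriv hφ_le hφ'_le hgm hg hw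
    (C₁ + s) (C₂ + s)
  rwa [abs_of_nonneg (sq_nonneg k), one_mul, add_sub_add_right_eq_sub] at this

theorem phase_functional_lipschitz_general
    (ν b a : ℝ) (hν : 0 < ν) (hb : 0 < b)
    (T : ℝ)
    (u : ℝ → ℝ → ℝ) (M : ℝ)
    (huL2 : ∀ t ∈ Set.Icc (0 : ℝ) T, MemLp (u t) 2 (volume : Measure ℝ))
    (huM : ∀ t ∈ Set.Icc (0 : ℝ) T, Real.sqrt (∫ x : ℝ, (u t x) ^ 2) ≤ M)
    (B : ℝ → ℝ → ℝ)
    (hB : B = fun t C => ∫ x : ℝ,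
      deriv (twProfile ν b) (x + C + waveSpeed ν b a * t)
        * (twProfile ν b (x + C + waveSpeed ν b a * t)
            - twProfile ν b (x + waveSpeed ν b a * t) - u t x)) :
    ∃ L : ℝ, ∀ t ∈ Set.Icc (0 : ℝ) T, ∀ C₁ C₂ : ℝ,
      |B t C₁ - B t C₂| ≤ L * |C₁ - C₂| := by
  set k := waveK ν b
  have hk : 0 < k := sqrt_pos.2 (by positivity)
  have hv : twProfile ν b = fun y => sigmoid (k * y) :=
    funext fun y => by rw [twProfile, sigmoid_def, neg_mul]
  refine ⟨k ^ 2 * ((∫ y, exp (-(k * |y|))) + ((∫ y, exp (-(k * |y|)) ^ 2) + M ^ 2) / 2),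
    fun t ht C₁ C₂ => ?_⟩
  have hM : ∫ x, u t x ^ 2 ≤ M ^ 2 := (sqrt_le_iff.1 (huM t ht)).2
  subst hB
  rw [hv]
  refine (abs_integral_sigmoid_pairing_sub_le hk (huL2 t ht) _ C₁ C₂).trans ?_
  gcongr

/-- Proposition 2.4: Lipschitz continuity (in the phase variable `C`,
uniformly in `t ∈ [0,T]`) of the phase functional
`B(t,C) = ⟨∂ₓ v(·+C+ct), v(·+C+ct) - v(·+ct) - u(t)⟩_H`, for any family `u(t)`
bounded in `L²(ℝ)` by `M`; the Lipschitz constant `L` depends only on `ν`, `b`, `M`. -/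
theorem phase_functional_lipschitz
    (ν b a : ℝ) (hν : 0 < ν) (hb : 0 < b) (ha : a ∈ Set.Ioo (0 : ℝ) 1)
    (T : ℝ) (hT : 0 < T)
    (u : ℝ → ℝ → ℝ) (M : ℝ)
    (huL2 : ∀ t ∈ Set.Icc (0 : ℝ) T, MemLp (u t) 2 (volume : Measure ℝ))
    (huM : ∀ t ∈ Set.Icc (0 : ℝ) T, Real.sqrt (∫ x : ℝ, (u t x) ^ 2) ≤ M)
    (B : ℝ → ℝ → ℝ)
    (hB : B = fun t C => ∫ x : ℝ,
      deriv (twProfile ν b) (x + C + waveSpeed ν b a * t)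
        * (twProfile ν b (x + C + waveSpeed ν b a * t)
            - twProfile ν b (x + waveSpeed ν b a * t) - u t x)) :
    ∃ L : ℝ, ∀ t ∈ Set.Icc (0 : ℝ) T, ∀ C₁ C₂ : ℝ,
      |B t C₁ - B t C₂| ≤ L * |C₁ - C₂| :=
  phase_functional_lipschitz_general ν b a hν hb T u M huL2 huM B hB
end

section
/- (Hilbert–Schmidt Lipschitz estimate for the noise coefficient) Let σ : ℝ → ℝ be Lipschitz with Lipschitz constant L_σ. Let k_Q ∈ L²(ℝ²) be a kernel with M := sup_{x ∈ ℝ} ∫_ℝ k_Q(x,y)² dy < ∞, and let √Q denote the integral operator (√Q h)(x) = ∫_ℝ k_Q(x,y) h(y) dy on L²(ℝ). Fix a measurable function ṽ : ℝ → ℝ. Then for all u₁, u₂ ∈ L²(ℝ) and every Hilbert basis (e_n)_{n≥1} of L²(ℝ): ∑_{n=1}^∞ ∫_ℝ ( (σ(u₁(x) + ṽ(x)) - σ(u₂(x) + ṽ(x)))·(√Q e_n)(x) )² dx ≤ L_σ²·M·‖u₁ - u₂‖_{L²}². -/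
open Real MeasureTheory

/-!
For a.e. `x` the numbers `(√Q eₙ)(x) = ∫ k_Q(x,y) eₙ(y) dy` are the coefficients of the kernel
section `k_Q(x,·) ∈ L²` in the orthonormal family `(eₙ)`, so Bessel's inequality bounds
`∑ₙ (√Q eₙ)(x)²` by `∫ k_Q(x,y)² dy ≤ M`. Multiplying by the pointwise Lipschitz bound
`(σ(u₁+ṽ) - σ(u₂+ṽ))² ≤ L_σ² (u₁-u₂)²` and integrating the finite partial sums gives the estimate.
-/

section

variable {α : Type*} [MeasurableSpace α] {μ : Measure α}

theorem Orthonormal.sum_sq_integral_mul_le {ι : Type*} {e : ι → Lp ℝ 2 μ}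
    (he : Orthonormal ℝ e) {f : α → ℝ} (hf : MemLp f 2 μ) (s : Finset ι) :
    ∑ n ∈ s, (∫ y, f y * e n y ∂μ) ^ 2 ≤ ∫ y, f y ^ 2 ∂μ := by
  have hinner (g : Lp ℝ 2 μ) : inner ℝ g (hf.toLp f) = ∫ y, f y * g y ∂μ := by
    rw [L2.inner_def]
    refine integral_congr_ae ?_
    filter_upwards [hf.coeFn_toLp] with y hy
    simp [hy]
  have hnorm : ‖hf.toLp f‖ ^ 2 = ∫ y, f y ^ 2 ∂μ := by
    rw [← real_inner_self_eq_norm_sq, L2.inner_def]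
    refine integral_congr_ae ?_
    filter_upwards [hf.coeFn_toLp] with y hy
    simp [hy, sq]
  simpa only [hinner, hnorm, Real.norm_eq_abs, sq_abs] using he.sum_inner_products_le (hf.toLp f)

theorem integral_sq_le_of_abs_le_mul {f u : α → ℝ} {c : ℝ} (hu : MemLp u 2 μ)
    (hfu : ∀ᵐ x ∂μ, |f x| ≤ c * |u x|) :
    ∫ x, f x ^ 2 ∂μ ≤ c ^ 2 * ∫ x, u x ^ 2 ∂μ := by
  rw [← integral_const_mul]
  refine integral_mono_of_nonneg (.of_forall fun x => sq_nonneg _)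
    (hu.integrable_sq.const_mul _) ?_
  filter_upwards [hfu] with x hx
  calc f x ^ 2 = |f x| ^ 2 := (sq_abs _).symm
    _ ≤ (c * |u x|) ^ 2 := pow_le_pow_left₀ (abs_nonneg _) hx 2
    _ = c ^ 2 * u x ^ 2 := by rw [mul_pow, sq_abs]

theorem tsum_integral_mul_sq_le {f : α → ℝ} {g : ℕ → α → ℝ} {M : ℝ} (hf : MemLp f 2 μ)
    (hg : ∀ n, AEStronglyMeasurable (g n) μ)
    (hgM : ∀ᵐ x ∂μ, ∀ s : Finset ℕ, ∑ n ∈ s, g n x ^ 2 ≤ M) :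
    ∑' n, ∫ x, (f x * g n x) ^ 2 ∂μ ≤ M * ∫ x, f x ^ 2 ∂μ := by
  have hsum_le : ∀ᵐ x ∂μ, ∀ s : Finset ℕ, ∑ n ∈ s, (f x * g n x) ^ 2 ≤ M * f x ^ 2 := by
    filter_upwards [hgM] with x hx s
    simp_rw [mul_pow, ← Finset.mul_sum, mul_comm M]
    exact mul_le_mul_of_nonneg_left (hx s) (sq_nonneg _)
  have hint : ∀ n, Integrable (fun x => (f x * g n x) ^ 2) μ := fun n =>
    (hf.integrable_sq.const_mul M).mono' ((hf.1.mul (hg n)).pow 2) <| by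
      filter_upwards [hsum_le] with x hx
      rw [Real.norm_eq_abs, abs_of_nonneg (sq_nonneg _)]
      simpa using hx {n}
  rw [← integral_const_mul]
  refine tsum_le_of_sum_le' (integral_nonneg_of_ae ?_) fun s => ?_
  · filter_upwards [hsum_le] with x hx
    simpa using hx ∅
  rw [← integral_finsetSum s fun n _ => hint n]
  exact integral_mono_ae (integrable_finsetSum s fun n _ => hint n)
    (hf.integrable_sq.const_mul M) (by filter_upwards [hsum_le] with x hx using hx s)

end

section

variable {α β : Type*} [MeasurableSpace α] [MeasurableSpace β] {μ : Measure α} {ν : Measure β}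
  [SFinite ν] {k : α → β → ℝ}

theorem aestronglyMeasurable_integral_kernel_mul
    (hk : AEStronglyMeasurable (fun p : α × β => k p.1 p.2) (μ.prod ν)) (g : Lp ℝ 2 ν) :
    AEStronglyMeasurable (fun x => ∫ y, k x y * g y ∂ν) μ :=
  (hk.mul ((Lp.aestronglyMeasurable g).comp_quasiMeasurePreserving
    Measure.quasiMeasurePreserving_snd)).integral_prod_right'

theorem ae_sum_sq_integral_kernel_mul_le [SFinite μ] {ι : Type*} {e : ι → Lp ℝ 2 ν}
    (he : Orthonormal ℝ e) (hk : MemLp (fun p : α × β => k p.1 p.2) 2 (μ.prod ν)) {M : ℝ}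
    (hM : ∀ᵐ x ∂μ, ∫ y, k x y ^ 2 ∂ν ≤ M) :
    ∀ᵐ x ∂μ, ∀ s : Finset ι, ∑ n ∈ s, (∫ y, k x y * e n y ∂ν) ^ 2 ≤ M := by
  filter_upwards [hk.integrable_sq.prod_right_ae, hk.aestronglyMeasurable.prodMk_left, hM]
    with x hx_int hx_meas hx_M s
  exact (he.sum_sq_integral_mul_le ((memLp_two_iff_integrable_sq hx_meas).mpr hx_int) s).trans
    hx_M

end

theorem hilbert_schmidt_lipschitz_general
    (σ : ℝ → ℝ) (Lσ : ℝ) (hσ : LipschitzWith Lσ.toNNReal σ)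
    (kQ : ℝ → ℝ → ℝ)
    (hkQ : MemLp (fun p : ℝ × ℝ => kQ p.1 p.2) 2 (volume : Measure (ℝ × ℝ)))
    (M : ℝ) (hM : ∀ x : ℝ, (∫ y : ℝ, (kQ x y) ^ 2) ≤ M)
    (vshift : ℝ → ℝ) (hvshift : Measurable vshift)
    (u₁ u₂ : ℝ → ℝ)
    (hu₁ : MemLp u₁ 2 (volume : Measure ℝ))
    (hu₂ : MemLp u₂ 2 (volume : Measure ℝ))
    (e : HilbertBasis ℕ ℝ (Lp ℝ 2 (volume : Measure ℝ))) :
    ∑' n : ℕ, ∫ x : ℝ,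
      ((σ (u₁ x + vshift x) - σ (u₂ x + vshift x))
          * ∫ y : ℝ, kQ x y * (e n : Lp ℝ 2 (volume : Measure ℝ)) y) ^ 2
    ≤ Lσ ^ 2 * M * ∫ x : ℝ, (u₁ x - u₂ x) ^ 2 := by
  set f := fun x => σ (u₁ x + vshift x) - σ (u₂ x + vshift x)
  have hf_lip : ∀ x, |f x| ≤ Lσ.toNNReal * |u₁ x - u₂ x| := fun x => by
    simpa [Real.dist_eq] using hσ.dist_le_mul (u₁ x + vshift x) (u₂ x + vshift x)
  have hf_meas : AEStronglyMeasurable f volume :=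
    (hσ.continuous.comp_aestronglyMeasurable (hu₁.1.add hvshift.aestronglyMeasurable)).sub
      (hσ.continuous.comp_aestronglyMeasurable (hu₂.1.add hvshift.aestronglyMeasurable))
  have hf : MemLp f 2 volume :=
    (hu₁.sub hu₂).of_le_mul hf_meas (.of_forall fun x => by simpa using hf_lip x)
  have hM_nonneg : 0 ≤ M := (integral_nonneg fun y => sq_nonneg _).trans (hM 0)
  have hLσ_sq : (Lσ.toNNReal : ℝ) ^ 2 ≤ Lσ ^ 2 := by
    simpa using pow_le_pow_left₀ (NNReal.coe_nonneg _) (Real.coe_toNNReal_le Lσ) 2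
  calc _ ≤ M * ∫ x, f x ^ 2 :=
        tsum_integral_mul_sq_le hf (fun n => aestronglyMeasurable_integral_kernel_mul hkQ.1 _)
          (ae_sum_sq_integral_kernel_mul_le e.orthonormal hkQ (.of_forall hM))
    _ ≤ M * ((Lσ.toNNReal : ℝ) ^ 2 * ∫ x, (u₁ x - u₂ x) ^ 2) := by
        gcongr
        exact integral_sq_le_of_abs_le_mul (hu₁.sub hu₂) (.of_forall hf_lip)
    _ ≤ Lσ ^ 2 * M * ∫ x : ℝ, (u₁ x - u₂ x) ^ 2 := by
        rw [mul_left_comm, ← mul_assoc]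
        gcongr

/-- Hilbert–Schmidt Lipschitz estimate for the noise coefficient:
for `σ` Lipschitz with constant `L_σ`, a square-integrable kernel `k_Q` with
`M = sup_x ∫ k_Q(x,y)² dy < ∞`, any measurable `ṽ`, `u₁, u₂ ∈ L²(ℝ)` and any
Hilbert basis `(eₙ)` of `L²(ℝ)`:
`∑ₙ ∫ ((σ(u₁+ṽ) - σ(u₂+ṽ))·(√Q eₙ))² dx ≤ L_σ²·M·‖u₁-u₂‖²`. -/
theorem hilbert_schmidt_lipschitz
    (σ : ℝ → ℝ) (Lσ : ℝ) (hLσ : 0 ≤ Lσ) (hσ : LipschitzWith Lσ.toNNReal σ)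
    (kQ : ℝ → ℝ → ℝ)
    (hkQ : MemLp (fun p : ℝ × ℝ => kQ p.1 p.2) 2 (volume : Measure (ℝ × ℝ)))
    (M : ℝ) (hM : ∀ x : ℝ, (∫ y : ℝ, (kQ x y) ^ 2) ≤ M)
    (vshift : ℝ → ℝ) (hvshift : Measurable vshift)
    (u₁ u₂ : ℝ → ℝ)
    (hu₁ : MemLp u₁ 2 (volume : Measure ℝ))
    (hu₂ : MemLp u₂ 2 (volume : Measure ℝ))
    (e : HilbertBasis ℕ ℝ (Lp ℝ 2 (volume : Measure ℝ))) :
    ∑' n : ℕ, ∫ x : ℝ,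
      ((σ (u₁ x + vshift x) - σ (u₂ x + vshift x))
          * ∫ y : ℝ, kQ x y * (e n : Lp ℝ 2 (volume : Measure ℝ)) y) ^ 2
    ≤ Lσ ^ 2 * M * ∫ x : ℝ, (u₁ x - u₂ x) ^ 2 :=
  hilbert_schmidt_lipschitz_general σ Lσ hσ kQ hkQ M hM vshift hvshift u₁ u₂ hu₁ hu₂ e
end

section
/- (Key estimate in the proof of Theorem 2.6) Let κ* = (2/5)·(νb/(ν+b))·min(a, 1-a), β = b(4+a), and δ ∈ (0,1). Let ũ : [0,∞) → H¹(ℝ) be such that t ↦ ‖ũ(t)‖_H is continuous, t ↦ ‖ũ(t)‖_H² is differentiable, and (d/dt)‖ũ(t)‖_H² ≤ -2κ*·‖ũ(t)‖_V² + 2β·‖ũ(t)‖_H·‖ũ(t)‖_V² for all t ≥ 0. If ‖ũ(0)‖_H < δ·κ*/β, then ‖ũ(t)‖_H ≤ e^{-(1-δ)κ* t}·‖ũ(0)‖_H for all t ≥ 0. -/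
open Real MeasureTheory

/-- key estimate in the proof of Theorem 2.6: if
`κ* = (2/5)(νb/(ν+b))·min(a,1-a)`, `β = b(4+a)`, `δ ∈ (0,1)`, and
`ũ : [0,∞) → H¹(ℝ)` has continuous `H`-norm `t ↦ ‖ũ(t)‖_H`, the map
`t ↦ ‖ũ(t)‖_H²` is differentiable with
`(d/dt)‖ũ(t)‖_H² ≤ -2κ*‖ũ(t)‖_V² + 2β‖ũ(t)‖_H‖ũ(t)‖_V²`, and
`‖ũ(0)‖_H < δκ*/β`, then `‖ũ(t)‖_H ≤ e^{-(1-δ)κ* t}‖ũ(0)‖_H` for all `t ≥ 0`. -/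
theorem gronwall_stability_estimate
    (ν b a δ : ℝ) (hν : 0 < ν) (hb : 0 < b) (ha : a ∈ Set.Ioo (0 : ℝ) 1)
    (hδ : δ ∈ Set.Ioo (0 : ℝ) 1)
    (u : ℝ → ℝ → ℝ)
    (hu : ∀ t : ℝ, 0 ≤ t → Differentiable ℝ (u t))
    (nH nV : ℝ → ℝ)
    (hnH : ∀ t : ℝ, nH t = Real.sqrt (∫ x : ℝ, (u t x) ^ 2))
    (hnV : ∀ t : ℝ, nV t
      = Real.sqrt ((∫ x : ℝ, (deriv (u t) x) ^ 2) + ∫ x : ℝ, (u t x) ^ 2))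
    (hcont : Continuous nH)
    (hdiff : ∀ t : ℝ, 0 ≤ t → DifferentiableAt ℝ (fun s => nH s ^ 2) t)
    (hineq : ∀ t : ℝ, 0 ≤ t →
      deriv (fun s => nH s ^ 2) t
        ≤ -2 * ((2 / 5) * (ν * b / (ν + b)) * min a (1 - a)) * nV t ^ 2
          + 2 * (b * (4 + a)) * nH t * nV t ^ 2)
    (h0 : nH 0 < δ * ((2 / 5) * (ν * b / (ν + b)) * min a (1 - a)) / (b * (4 + a))) :
    ∀ t : ℝ, 0 ≤ t →
      nH t ≤ Real.exp (-(1 - δ) * ((2 / 5) * (ν * b / (ν + b)) * min a (1 - a)) * t)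
               * nH 0 := by
  obtain ⟨ha0, ha1⟩ := ha
  obtain ⟨hδ0, hδ1⟩ := hδ
  set κ : ℝ := (2 / 5) * (ν * b / (ν + b)) * min a (1 - a) with hκdef
  set β : ℝ := b * (4 + a) with hβdef
  have hκ : 0 < κ := by
    apply mul_pos
    · positivity
    · exact lt_min ha0 (by linarith)
  have hβ : 0 < β := by positivity
  set K : ℝ := δ * κ / β with hKdef
  have hK : 0 < K := by positivity
  -- nonnegativity of nH
  have hH0 : ∀ t : ℝ, 0 ≤ nH t := fun t => (hnH t) ▸ Real.sqrt_nonneg _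
  -- nH t ^ 2 ≤ nV t ^ 2
  have hVH : ∀ t : ℝ, nH t ^ 2 ≤ nV t ^ 2 := by
    intro t
    have hA : (0:ℝ) ≤ ∫ x : ℝ, (deriv (u t) x) ^ 2 :=
      integral_nonneg fun x => sq_nonneg _
    have hB : (0:ℝ) ≤ ∫ x : ℝ, (u t x) ^ 2 :=
      integral_nonneg fun x => sq_nonneg _
    rw [hnH t, hnV t, Real.sq_sqrt hB, Real.sq_sqrt (by linarith)]
    linarith
  have hV0 : ∀ t : ℝ, 0 ≤ nV t ^ 2 := fun t => le_trans (sq_nonneg _) (hVH t)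
  -- Bootstrap: nH t < K for all t ≥ 0
  have hlt : ∀ t : ℝ, 0 ≤ t → nH t < K := by
    by_contra hcon
    push_neg at hcon
    obtain ⟨t1, ht1, hKt1⟩ := hcon
    set B : Set ℝ := {t | 0 ≤ t ∧ K ≤ nH t} with hBdef
    have hBne : B.Nonempty := ⟨t1, ht1, hKt1⟩
    have hBbdd : BddBelow B := ⟨0, fun x hx => hx.1⟩
    have hBclosed : IsClosed B := by
      have : B = {t : ℝ | 0 ≤ t} ∩ nH ⁻¹' {y | K ≤ y} := rfl
      rw [this]
      exact (isClosed_Ici (a := (0:ℝ))).inter (isClosed_Ici.preimage hcont)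
    set t0 : ℝ := sInf B with ht0def
    have ht0B : t0 ∈ B := hBclosed.csInf_mem hBne hBbdd
    obtain ⟨ht00, hKt0⟩ := ht0B
    have hbelow : ∀ s : ℝ, 0 ≤ s → s < t0 → nH s < K := by
      intro s hs hst
      by_contra hns
      push_neg at hns
      exact absurd (csInf_le hBbdd ⟨hs, hns⟩) (not_le.mpr hst)
    -- nH² is antitone on [0, t0]
    have hanti : AntitoneOn (fun s => nH s ^ 2) (Set.Icc 0 t0) := by
      apply antitoneOn_of_deriv_nonpos (convex_Icc 0 t0)
      · exact (hcont.pow 2).continuousOn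
      · intro x hx
        rw [interior_Icc] at hx
        exact (hdiff x hx.1.le).differentiableWithinAt
      · intro x hx
        rw [interior_Icc] at hx
        have hx0 : (0:ℝ) ≤ x := hx.1.le
        have h1 := hineq x hx0
        have h2 : nH x < K := hbelow x hx0 hx.2
        have h4 : 0 ≤ nV x ^ 2 := hV0 x
        have h7 : nH x * nV x ^ 2 ≤ K * nV x ^ 2 :=
          mul_le_mul_of_nonneg_right h2.le h4
        have h8 : 2 * β * (nH x * nV x ^ 2) ≤ 2 * β * (K * nV x ^ 2) := by
          have hb2 : (0:ℝ) ≤ 2 * β := by positivity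
          exact mul_le_mul_of_nonneg_left h7 hb2
        have h9 : 2 * β * (K * nV x ^ 2) = 2 * (δ * κ) * nV x ^ 2 := by
          rw [hKdef]; field_simp
        have h10 : 0 ≤ 2 * (1 - δ) * κ * nV x ^ 2 := by
          have : (0:ℝ) ≤ 1 - δ := by linarith
          positivity
        nlinarith [h1, h8, h9, h10]
    have h5 : nH t0 ^ 2 ≤ nH 0 ^ 2 :=
      hanti (Set.left_mem_Icc.mpr ht00) (Set.right_mem_Icc.mpr ht00) ht00
    nlinarith [hH0 0, hH0 t0]
  -- Main Gronwall step
  set c : ℝ := 2 * (1 - δ) * κ with hcdef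
  have hc : 0 < c := by
    have : 0 < 1 - δ := by linarith
    positivity
  have hderiv : ∀ t : ℝ, 0 ≤ t →
      deriv (fun s => nH s ^ 2) t ≤ -c * nH t ^ 2 := by
    intro t ht
    have h1 := hineq t ht
    have h2 := hlt t ht
    have h4 := hVH t
    have h5 := hV0 t
    have h7 : nH t * nV t ^ 2 ≤ K * nV t ^ 2 :=
      mul_le_mul_of_nonneg_right h2.le h5
    have h8 : 2 * β * (nH t * nV t ^ 2) ≤ 2 * β * (K * nV t ^ 2) := by
      have hb2 : (0:ℝ) ≤ 2 * β := by positivity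
      exact mul_le_mul_of_nonneg_left h7 hb2
    have h9 : 2 * β * (K * nV t ^ 2) = 2 * (δ * κ) * nV t ^ 2 := by
      rw [hKdef]; field_simp
    have h11 : -2 * κ * nV t ^ 2 + 2 * (δ * κ) * nV t ^ 2 = -c * nV t ^ 2 := by
      rw [hcdef]; ring
    have h6 : deriv (fun s => nH s ^ 2) t ≤ -c * nV t ^ 2 := by
      nlinarith [h1, h8, h9, h11]
    have h12 : c * nH t ^ 2 ≤ c * nV t ^ 2 := mul_le_mul_of_nonneg_left h4 hc.le
    calc deriv (fun s => nH s ^ 2) t ≤ -c * nV t ^ 2 := h6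
      _ ≤ -c * nH t ^ 2 := by linarith
  -- g s = nH s ^ 2 * exp (c s) is antitone on [0, ∞)
  set g : ℝ → ℝ := fun s => nH s ^ 2 * Real.exp (c * s) with hgdef
  have hganti : AntitoneOn g (Set.Ici 0) := by
    apply antitoneOn_of_deriv_nonpos (convex_Ici 0)
    · exact ((hcont.pow 2).mul (Real.continuous_exp.comp (continuous_const.mul continuous_id))).continuousOn
    · intro x hx
      rw [interior_Ici] at hx
      have hexp : DifferentiableAt ℝ (fun s : ℝ => Real.exp (c * s)) x :=
        (((hasDerivAt_id x).const_mul c).exp).differentiableAt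
      exact ((hdiff x hx.le).mul hexp).differentiableWithinAt
    · intro x hx
      rw [interior_Ici] at hx
      have hexp : HasDerivAt (fun s : ℝ => Real.exp (c * s)) (Real.exp (c * x) * c) x := by
        have := ((hasDerivAt_id x).const_mul c).exp
        simpa using this
      have hn : HasDerivAt (fun s => nH s ^ 2) (deriv (fun s => nH s ^ 2) x) x :=
        (hdiff x hx.le).hasDerivAt
      have hg : HasDerivAt g
          (deriv (fun s => nH s ^ 2) x * Real.exp (c * x)
            + nH x ^ 2 * (Real.exp (c * x) * c)) x := hn.mul hexp
      rw [hg.deriv]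
      have h1 := hderiv x hx.le
      have h2 : 0 < Real.exp (c * x) := Real.exp_pos _
      nlinarith
  intro t ht
  have hgt : g t ≤ g 0 := hganti (Set.self_mem_Ici) ht ht
  have hg0 : g 0 = nH 0 ^ 2 := by simp [hgdef]
  have hE : Real.exp (-(1 - δ) * κ * t) ^ 2 = Real.exp (-(c * t)) := by
    rw [← Real.exp_nat_mul]
    congr 1
    push_cast
    ring
  have hEc : Real.exp (-(c * t)) * Real.exp (c * t) = 1 := by
    rw [← Real.exp_add]; simp
  have hsq : nH t ^ 2 ≤ (Real.exp (-(1 - δ) * κ * t) * nH 0) ^ 2 := by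
    have h2 : 0 < Real.exp (c * t) := Real.exp_pos _
    have h3 : 0 < Real.exp (-(c * t)) := Real.exp_pos _
    have hgt' : nH t ^ 2 * Real.exp (c * t) ≤ nH 0 ^ 2 := by
      rw [hg0] at hgt; exact hgt
    have : nH t ^ 2 ≤ nH 0 ^ 2 * Real.exp (-(c * t)) := by
      have h4 := mul_le_mul_of_nonneg_right hgt' h3.le
      have h5 : nH t ^ 2 * Real.exp (c * t) * Real.exp (-(c * t)) = nH t ^ 2 := by
        rw [mul_assoc, mul_comm (Real.exp (c * t)), hEc, mul_one]
      rwa [h5] at h4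
    calc nH t ^ 2 ≤ nH 0 ^ 2 * Real.exp (-(c * t)) := this
      _ = (Real.exp (-(1 - δ) * κ * t) * nH 0) ^ 2 := by rw [mul_pow, hE]; ring
  have hrhs : 0 ≤ Real.exp (-(1 - δ) * κ * t) * nH 0 :=
    mul_nonneg (Real.exp_pos _).le (hH0 0)
  have := Real.sqrt_le_sqrt hsq
  rwa [Real.sqrt_sq (hH0 t), Real.sqrt_sq hrhs] at this
end
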